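/- arXiv:2209.14963 — 4 statements merged into one kernel-verified Lean document; each statement's English description precedes it below -/
import Mathlib

section
/- Let R ∈ ℝ^{m×n} have every entry of absolute value at most C. Then the map π ↦ J(π,γ,R) from the compact metric space (Π_MR, μ) to (ℝ^m, ‖·‖_∞) is uniformly continuous, where J(π,γ,R)(x) := lim_{T→∞} J_T(π,γ,R)(x) is the infinite-horizon risk-sensitive cost (this limit exists for every π and x) and ‖·‖_∞ on ℝ^m is the maximum absolute entry norm. -/
open Finset Filter Matrix

/-- A row-stochastic matrix (decision rule): nonnegative entries, each row sums to 1. -/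
def IsStoch (m n : ℕ) (d : Matrix (Fin m) (Fin n) ℝ) : Prop :=
  (∀ s a, 0 ≤ d s a) ∧ ∀ s, ∑ a, d s a = 1

/-- Valid transition probabilities `p s a s' = p(s'|s,a)`. -/
def IsTransKer (m n : ℕ) (p : Fin m → Fin n → Fin m → ℝ) : Prop :=
  (∀ s a s', 0 ≤ p s a s') ∧ ∀ s a, ∑ s', p s a s' = 1

/-- Max absolute entry norm on vectors. -/
noncomputable def vecNorm {m : ℕ} (v : Fin m → ℝ) : ℝ := ⨆ i, |v i|

/-- Maximum absolute row-sum norm on matrices. -/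
noncomputable def rowSumNorm {m n : ℕ} (B : Matrix (Fin m) (Fin n) ℝ) : ℝ :=
  ⨆ i, ∑ j, |B i j|

/-- Max absolute entry norm on matrices. -/
noncomputable def maxNorm {m n : ℕ} (B : Matrix (Fin m) (Fin n) ℝ) : ℝ :=
  ⨆ i, ⨆ j, |B i j|

/-- `(R_d)_s = ∑_a R(s,a) d(a|s)`. -/
noncomputable def Rvec {m n : ℕ} (R d : Matrix (Fin m) (Fin n) ℝ) : Fin m → ℝ :=
  fun s => ∑ a, R s a * d s a

/-- `(P_d)_{s,s'} = ∑_a p(s'|s,a) d(a|s)`. -/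
noncomputable def Pmat {m n : ℕ} (p : Fin m → Fin n → Fin m → ℝ)
    (d : Matrix (Fin m) (Fin n) ℝ) : Matrix (Fin m) (Fin m) ℝ :=
  fun s s' => ∑ a, p s a s' * d s a

/-- `P_0^π = I`, `P_{t+1}^π = P_t^π ⬝ P_{d_t}`. -/
noncomputable def Ppi {m n : ℕ} (p : Fin m → Fin n → Fin m → ℝ)
    (π : ℕ → Matrix (Fin m) (Fin n) ℝ) : ℕ → Matrix (Fin m) (Fin m) ℝ
  | 0 => 1
  | t + 1 => Ppi p π t * Pmat p (π t)

/-- Finite-horizon standard discounted cost vector `V_T(π,R)`. -/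
noncomputable def VT {m n : ℕ} (β : ℝ) (p : Fin m → Fin n → Fin m → ℝ)
    (π : ℕ → Matrix (Fin m) (Fin n) ℝ) (R : Matrix (Fin m) (Fin n) ℝ) (T : ℕ) :
    Fin m → ℝ :=
  fun x => ∑ t ∈ Finset.range T, β ^ t * (Ppi p π t *ᵥ Rvec R (π t)) x

/-- Infinite-horizon standard discounted cost vector `V(π,R)`. -/
noncomputable def Vinf {m n : ℕ} (β : ℝ) (p : Fin m → Fin n → Fin m → ℝ)
    (π : ℕ → Matrix (Fin m) (Fin n) ℝ) (R : Matrix (Fin m) (Fin n) ℝ) :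
    Fin m → ℝ :=
  fun x => ∑' t : ℕ, β ^ t * (Ppi p π t *ᵥ Rvec R (π t)) x

/-- `Qrev β γ p π R T k = Q_{T-1-k}^{T,π,R}`, defined by the backward recursion. -/
noncomputable def Qrev {m n : ℕ} (β γ : ℝ) (p : Fin m → Fin n → Fin m → ℝ)
    (π : ℕ → Matrix (Fin m) (Fin n) ℝ) (R : Matrix (Fin m) (Fin n) ℝ) (T : ℕ) :
    ℕ → Matrix (Fin m) (Fin n) ℝ
  | 0 => fun s a => Real.exp (γ * β ^ (T - 1) * R s a)
  | k + 1 => fun s a =>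
      Real.exp (γ * β ^ (T - 1 - (k + 1)) * R s a) *
        ∑ s', p s a s' * ∑ a', π (T - 1 - k) s' a' * Qrev β γ p π R T k s' a'

/-- `Q_t^{T,π,R}` for `0 ≤ t ≤ T-1`. -/
noncomputable def Qmat {m n : ℕ} (β γ : ℝ) (p : Fin m → Fin n → Fin m → ℝ)
    (π : ℕ → Matrix (Fin m) (Fin n) ℝ) (R : Matrix (Fin m) (Fin n) ℝ) (T t : ℕ) :
    Matrix (Fin m) (Fin n) ℝ :=
  Qrev β γ p π R T (T - 1 - t)

/-- Finite-horizon risk-sensitive cost vector `J_T(π,γ,R)`. -/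
noncomputable def JT {m n : ℕ} (β γ : ℝ) (p : Fin m → Fin n → Fin m → ℝ)
    (π : ℕ → Matrix (Fin m) (Fin n) ℝ) (R : Matrix (Fin m) (Fin n) ℝ) (T : ℕ) :
    Fin m → ℝ :=
  fun s => ∑ a, π 0 s a * Qmat β γ p π R T 0 s a

/-- Infinite-horizon risk-sensitive cost `J(π,γ,R)(x) = lim_{T→∞} J_T(π,γ,R)(x)`. -/
noncomputable def Jinf {m n : ℕ} (β γ : ℝ) (p : Fin m → Fin n → Fin m → ℝ)
    (π : ℕ → Matrix (Fin m) (Fin n) ℝ) (R : Matrix (Fin m) (Fin n) ℝ) (x : Fin m) : ℝ :=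
  limUnder atTop (fun T => JT β γ p π R T x)

/-- The metric `μ(π₁,π₂) = sup_t δ^t ‖d_t − f_t‖_∞` on Markovian randomized policies. -/
noncomputable def policyDist {m n : ℕ} (δ : ℝ)
    (π₁ π₂ : ℕ → Matrix (Fin m) (Fin n) ℝ) : ℝ :=
  ⨆ t : ℕ, δ ^ t * rowSumNorm (π₁ t - π₂ t)


/-! ### Auxiliary lemmas -/

section Aux

lemma le_fin_ciSup {k : ℕ} [Nonempty (Fin k)] (f : Fin k → ℝ) (i : Fin k) :
    f i ≤ ⨆ j, f j :=
  le_ciSup (Set.Finite.bddAbove (Set.finite_range f)) i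

lemma wavg_le {k : ℕ} {w q : Fin k → ℝ} (hw : ∀ a, 0 ≤ w a) (hs : ∑ a, w a = 1)
    {M : ℝ} (hq : ∀ a, q a ≤ M) : ∑ a, w a * q a ≤ M := by
  calc ∑ a, w a * q a ≤ ∑ a, w a * M :=
        Finset.sum_le_sum fun a _ => mul_le_mul_of_nonneg_left (hq a) (hw a)
    _ = M := by rw [← Finset.sum_mul, hs, one_mul]

lemma wavg_ge {k : ℕ} {w q : Fin k → ℝ} (hw : ∀ a, 0 ≤ w a) (hs : ∑ a, w a = 1)
    {M : ℝ} (hq : ∀ a, M ≤ q a) : M ≤ ∑ a, w a * q a := by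
  calc M = ∑ a, w a * M := by rw [← Finset.sum_mul, hs, one_mul]
    _ ≤ ∑ a, w a * q a :=
        Finset.sum_le_sum fun a _ => mul_le_mul_of_nonneg_left (hq a) (hw a)

lemma wavg_abs_le {k : ℕ} {w q : Fin k → ℝ} (hw : ∀ a, 0 ≤ w a) (hs : ∑ a, w a = 1)
    {M : ℝ} (hq : ∀ a, |q a| ≤ M) : |∑ a, w a * q a| ≤ M := by
  refine (Finset.abs_sum_le_sum_abs (fun a => w a * q a) Finset.univ).trans ?_
  calc ∑ a, |w a * q a| = ∑ a, w a * |q a| := by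
        simp [abs_mul, abs_of_nonneg (hw _)]
    _ ≤ M := wavg_le hw hs hq

end Aux

section Main

variable {m n : ℕ} {p : Fin m → Fin n → Fin m → ℝ} {β γ C : ℝ}
  {π π₁ π₂ : ℕ → Matrix (Fin m) (Fin n) ℝ} {R : Matrix (Fin m) (Fin n) ℝ}

/-- partial sums of discounted risk bounds -/
noncomputable def Spow (β γ C : ℝ) (T k : ℕ) : ℝ :=
  ∑ j ∈ Finset.range (k + 1), |γ| * C * β ^ (T - 1 - j)

lemma Spow_succ (T k : ℕ) :
    Spow β γ C T (k + 1) = Spow β γ C T k + |γ| * C * β ^ (T - 1 - (k + 1)) := by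
  simp [Spow, Finset.sum_range_succ]

lemma Spow_zero (T : ℕ) : Spow β γ C T 0 = |γ| * C * β ^ (T - 1) := by
  simp [Spow]

lemma exp_term_bounds (hβ0 : 0 < β) (hC : 0 < C) (hR : ∀ s a, |R s a| ≤ C)
    (j : ℕ) (s : Fin m) (a : Fin n) :
    Real.exp (γ * β ^ j * R s a) ≤ Real.exp (|γ| * C * β ^ j) ∧
      Real.exp (-(|γ| * C * β ^ j)) ≤ Real.exp (γ * β ^ j * R s a) := by
  have habs : |γ * β ^ j * R s a| ≤ |γ| * C * β ^ j := by
    calc |γ * β ^ j * R s a| = |γ| * β ^ j * |R s a| := by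
          rw [abs_mul, abs_mul, abs_pow, abs_of_pos hβ0]
      _ ≤ |γ| * β ^ j * C := by
          have h0 : 0 ≤ |γ| * β ^ j := by positivity
          exact mul_le_mul_of_nonneg_left (hR s a) h0
      _ = |γ| * C * β ^ j := by ring
  obtain ⟨h1, h2⟩ := abs_le.mp habs
  exact ⟨Real.exp_le_exp.mpr h2, Real.exp_le_exp.mpr h1⟩

lemma Qrev_bounds (hp : IsTransKer m n p) (hπ : ∀ t, IsStoch m n (π t))
    (hβ0 : 0 < β) (hC : 0 < C) (hR : ∀ s a, |R s a| ≤ C) (T : ℕ) :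
    ∀ k s a, Real.exp (-(Spow β γ C T k)) ≤ Qrev β γ p π R T k s a ∧
      Qrev β γ p π R T k s a ≤ Real.exp (Spow β γ C T k) := by
  intro k
  induction k with
  | zero =>
      intro s a
      have h := exp_term_bounds (γ := γ) (C := C) (R := R) hβ0 hC hR (T - 1) s a
      rw [Spow_zero]
      exact ⟨h.2, h.1⟩
  | succ k ih =>
      intro s a
      have hd := hπ (T - 1 - k)
      have hQup : ∀ s', ∑ a', π (T - 1 - k) s' a' * Qrev β γ p π R T k s' a'
          ≤ Real.exp (Spow β γ C T k) :=
        fun s' => wavg_le (hd.1 s') (hd.2 s') (fun a' => (ih s' a').2)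
      have hQlo : ∀ s', Real.exp (-(Spow β γ C T k))
          ≤ ∑ a', π (T - 1 - k) s' a' * Qrev β γ p π R T k s' a' :=
        fun s' => wavg_ge (hd.1 s') (hd.2 s') (fun a' => (ih s' a').1)
      have hOup : ∑ s', p s a s' * ∑ a', π (T - 1 - k) s' a' * Qrev β γ p π R T k s' a'
          ≤ Real.exp (Spow β γ C T k) := wavg_le (hp.1 s a) (hp.2 s a) hQup
      have hOlo : Real.exp (-(Spow β γ C T k))
          ≤ ∑ s', p s a s' * ∑ a', π (T - 1 - k) s' a' * Qrev β γ p π R T k s' a' :=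
        wavg_ge (hp.1 s a) (hp.2 s a) hQlo
      have he := exp_term_bounds (γ := γ) (C := C) (R := R) hβ0 hC hR (T - 1 - (k + 1)) s a
      constructor
      · show Real.exp (-(Spow β γ C T (k+1))) ≤ Real.exp (γ * β ^ (T - 1 - (k + 1)) * R s a) * _
        rw [Spow_succ]
        calc Real.exp (-(Spow β γ C T k + |γ| * C * β ^ (T - 1 - (k + 1))))
            = Real.exp (-(|γ| * C * β ^ (T - 1 - (k + 1)))) * Real.exp (-(Spow β γ C T k)) := by
              rw [← Real.exp_add]; ring_nf
          _ ≤ Real.exp (γ * β ^ (T - 1 - (k + 1)) * R s a) *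
              ∑ s', p s a s' * ∑ a', π (T - 1 - k) s' a' * Qrev β γ p π R T k s' a' :=
              mul_le_mul he.2 hOlo (Real.exp_pos _).le (Real.exp_pos _).le
      · show Real.exp (γ * β ^ (T - 1 - (k + 1)) * R s a) * _ ≤ Real.exp (Spow β γ C T (k+1))
        rw [Spow_succ]
        calc Real.exp (γ * β ^ (T - 1 - (k + 1)) * R s a) *
              ∑ s', p s a s' * ∑ a', π (T - 1 - k) s' a' * Qrev β γ p π R T k s' a'
            ≤ Real.exp (|γ| * C * β ^ (T - 1 - (k + 1))) * Real.exp (Spow β γ C T k) :=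
              mul_le_mul he.1 hOup ((Real.exp_pos _).le.trans hOlo) (Real.exp_pos _).le
          _ = Real.exp (Spow β γ C T k + |γ| * C * β ^ (T - 1 - (k + 1))) := by
              rw [← Real.exp_add]; ring_nf

lemma Spow_le (hβ0 : 0 < β) (hβ1 : β < 1) (hC : 0 < C) (T k : ℕ) (hk : k ≤ T - 1) :
    Spow β γ C T k ≤ |γ| * C / (1 - β) := by
  have hgeo : ∑ j ∈ Finset.range (k + 1), β ^ (T - 1 - j) ≤ 1 / (1 - β) := by
    have hinj : ∀ x ∈ Finset.range (k + 1), ∀ y ∈ Finset.range (k + 1),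
        T - 1 - x = T - 1 - y → x = y := by
      intro x hx y hy hxy
      simp only [Finset.mem_range] at hx hy
      omega
    have himg : ∑ j ∈ Finset.range (k + 1), β ^ (T - 1 - j)
        = ∑ i ∈ (Finset.range (k + 1)).image (fun j => T - 1 - j), β ^ i :=
      (Finset.sum_image hinj).symm
    rw [himg]
    have hsub : (Finset.range (k + 1)).image (fun j => T - 1 - j) ⊆ Finset.range (T - 1 + 1) := by
      intro i hi
      simp only [Finset.mem_image, Finset.mem_range] at hi ⊢
      omega
    calc ∑ i ∈ (Finset.range (k + 1)).image (fun j => T - 1 - j), β ^ i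
        ≤ ∑ i ∈ Finset.range (T - 1 + 1), β ^ i :=
          Finset.sum_le_sum_of_subset_of_nonneg hsub (fun i _ _ => pow_nonneg hβ0.le i)
      _ ≤ ∑' i : ℕ, β ^ i :=
          Summable.sum_le_tsum _ (fun i _ => pow_nonneg hβ0.le i)
            (summable_geometric_of_lt_one hβ0.le hβ1)
      _ = 1 / (1 - β) := by rw [tsum_geometric_of_lt_one hβ0.le hβ1, one_div]
  calc Spow β γ C T k = |γ| * C * ∑ j ∈ Finset.range (k + 1), β ^ (T - 1 - j) := by
        rw [Spow, Finset.mul_sum]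
    _ ≤ |γ| * C * (1 / (1 - β)) := by
        have h0 : (0:ℝ) ≤ |γ| * C := by positivity
        exact mul_le_mul_of_nonneg_left hgeo h0
    _ = |γ| * C / (1 - β) := by ring

lemma step_contract (hp : IsTransKer m n p) {d : Matrix (Fin m) (Fin n) ℝ}
    (hd : (∀ s a, 0 ≤ d s a) ∧ ∀ s, ∑ a, d s a = 1)
    {Q Q' : Matrix (Fin m) (Fin n) ℝ} {E : ℝ}
    (hE : ∀ s a, |Q s a - Q' s a| ≤ E) (s : Fin m) (a : Fin n) :
    |(∑ s', p s a s' * ∑ a', d s' a' * Q s' a')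
      - ∑ s', p s a s' * ∑ a', d s' a' * Q' s' a'| ≤ E := by
  have inner : ∀ s', |(∑ a', d s' a' * Q s' a') - ∑ a', d s' a' * Q' s' a'| ≤ E := by
    intro s'
    rw [← Finset.sum_sub_distrib]
    simp only [← mul_sub]
    exact wavg_abs_le (hd.1 s') (hd.2 s') (fun a' => hE s' a')
  rw [← Finset.sum_sub_distrib]
  simp only [← mul_sub]
  exact wavg_abs_le (hp.1 s a) (hp.2 s a) inner

end Main

section Main2

variable {m n : ℕ} {p : Fin m → Fin n → Fin m → ℝ} {β γ C : ℝ}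
  {π π₁ π₂ : ℕ → Matrix (Fin m) (Fin n) ℝ} {R : Matrix (Fin m) (Fin n) ℝ}

lemma Qrev_succ_apply (T k : ℕ) (s : Fin m) (a : Fin n) :
    Qrev β γ p π R T (k + 1) s a =
      Real.exp (γ * β ^ (T - 1 - (k + 1)) * R s a) *
        ∑ s', p s a s' * ∑ a', π (T - 1 - k) s' a' * Qrev β γ p π R T k s' a' := rfl

lemma Qrev_zero_apply (T : ℕ) (s : Fin m) (a : Fin n) :
    Qrev β γ p π R T 0 s a = Real.exp (γ * β ^ (T - 1) * R s a) := rfl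

lemma Qrev_horizon_diff (hp : IsTransKer m n p) (hπ : ∀ t, IsStoch m n (π t))
    (hβ0 : 0 < β) (hβ1 : β < 1) (hC : 0 < C) (hR : ∀ s a, |R s a| ≤ C) (T : ℕ) :
    ∀ k s a, |Qrev β γ p π R (T + 1) (k + 1) s a - Qrev β γ p π R T k s a|
      ≤ Real.exp (Spow β γ C T k) * (Real.exp (|γ| * C * β ^ T) - 1) := by
  have hc0 : (0:ℝ) ≤ |γ| * C * β ^ T := by positivity
  have hone : (1:ℝ) ≤ Real.exp (|γ| * C * β ^ T) := Real.one_le_exp hc0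
  intro k
  induction k with
  | zero =>
      intro s a
      have hd := hπ (T + 1 - 1 - 0)
      have hiup : ∀ s', ∑ a', π (T + 1 - 1 - 0) s' a' * Qrev β γ p π R (T + 1) 0 s' a'
          ≤ Real.exp (|γ| * C * β ^ T) := by
        intro s'
        refine wavg_le (hd.1 s') (hd.2 s') fun a' => ?_
        rw [Qrev_zero_apply, show T + 1 - 1 = T from rfl]
        exact (exp_term_bounds (γ := γ) (C := C) (R := R) hβ0 hC hR T s' a').1
      have hilo : ∀ s', Real.exp (-(|γ| * C * β ^ T))
          ≤ ∑ a', π (T + 1 - 1 - 0) s' a' * Qrev β γ p π R (T + 1) 0 s' a' := by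
        intro s'
        refine wavg_ge (hd.1 s') (hd.2 s') fun a' => ?_
        rw [Qrev_zero_apply, show T + 1 - 1 = T from rfl]
        exact (exp_term_bounds (γ := γ) (C := C) (R := R) hβ0 hC hR T s' a').2
      have houp : ∑ s', p s a s' * ∑ a', π (T + 1 - 1 - 0) s' a' * Qrev β γ p π R (T + 1) 0 s' a'
          ≤ Real.exp (|γ| * C * β ^ T) := wavg_le (hp.1 s a) (hp.2 s a) hiup
      have holo : Real.exp (-(|γ| * C * β ^ T))
          ≤ ∑ s', p s a s' * ∑ a', π (T + 1 - 1 - 0) s' a' * Qrev β γ p π R (T + 1) 0 s' a' :=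
        wavg_ge (hp.1 s a) (hp.2 s a) hilo
      have havg : |(∑ s', p s a s' * ∑ a', π (T + 1 - 1 - 0) s' a' *
            Qrev β γ p π R (T + 1) 0 s' a') - 1| ≤ Real.exp (|γ| * C * β ^ T) - 1 := by
        rw [abs_le]
        constructor
        · nlinarith [Real.add_one_le_exp (|γ| * C * β ^ T),
            Real.add_one_le_exp (-(|γ| * C * β ^ T))]
        · linarith
      rw [Qrev_succ_apply, Qrev_zero_apply,
        show T + 1 - 1 - (0 + 1) = T - 1 from by omega]
      calc |Real.exp (γ * β ^ (T - 1) * R s a) *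
              (∑ s', p s a s' * ∑ a', π (T + 1 - 1 - 0) s' a' * Qrev β γ p π R (T + 1) 0 s' a')
              - Real.exp (γ * β ^ (T - 1) * R s a)|
          = Real.exp (γ * β ^ (T - 1) * R s a) *
              |(∑ s', p s a s' * ∑ a', π (T + 1 - 1 - 0) s' a' *
                Qrev β γ p π R (T + 1) 0 s' a') - 1| := by
            rw [show Real.exp (γ * β ^ (T - 1) * R s a) *
                (∑ s', p s a s' * ∑ a', π (T + 1 - 1 - 0) s' a' * Qrev β γ p π R (T + 1) 0 s' a')
                - Real.exp (γ * β ^ (T - 1) * R s a)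
                = Real.exp (γ * β ^ (T - 1) * R s a) *
                  ((∑ s', p s a s' * ∑ a', π (T + 1 - 1 - 0) s' a' *
                    Qrev β γ p π R (T + 1) 0 s' a') - 1) from by ring,
              abs_mul, abs_of_pos (Real.exp_pos _)]
        _ ≤ Real.exp (|γ| * C * β ^ (T - 1)) * (Real.exp (|γ| * C * β ^ T) - 1) :=
            mul_le_mul (exp_term_bounds (γ := γ) (C := C) (R := R) hβ0 hC hR (T - 1) s a).1
              havg (abs_nonneg _) (Real.exp_pos _).le
        _ = Real.exp (Spow β γ C T 0) * (Real.exp (|γ| * C * β ^ T) - 1) := by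
            rw [Spow_zero]
  | succ k ih =>
      intro s a
      rw [Qrev_succ_apply (T := T + 1) (k := k + 1), Qrev_succ_apply (T := T) (k := k),
        show T + 1 - 1 - (k + 1 + 1) = T - 1 - (k + 1) from by omega,
        show T + 1 - 1 - (k + 1) = T - 1 - k from by omega]
      have hcon := step_contract hp (hπ (T - 1 - k)) (fun s' a' => ih s' a') s a
      calc |Real.exp (γ * β ^ (T - 1 - (k + 1)) * R s a) *
              (∑ s', p s a s' * ∑ a', π (T - 1 - k) s' a' * Qrev β γ p π R (T + 1) (k + 1) s' a')
            - Real.exp (γ * β ^ (T - 1 - (k + 1)) * R s a) *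
              (∑ s', p s a s' * ∑ a', π (T - 1 - k) s' a' * Qrev β γ p π R T k s' a')|
          = Real.exp (γ * β ^ (T - 1 - (k + 1)) * R s a) *
              |(∑ s', p s a s' * ∑ a', π (T - 1 - k) s' a' * Qrev β γ p π R (T + 1) (k + 1) s' a')
              - ∑ s', p s a s' * ∑ a', π (T - 1 - k) s' a' * Qrev β γ p π R T k s' a'| := by
            rw [← mul_sub, abs_mul, abs_of_pos (Real.exp_pos _)]
        _ ≤ Real.exp (|γ| * C * β ^ (T - 1 - (k + 1))) *
              (Real.exp (Spow β γ C T k) * (Real.exp (|γ| * C * β ^ T) - 1)) :=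
            mul_le_mul (exp_term_bounds (γ := γ) (C := C) (R := R) hβ0 hC hR
              (T - 1 - (k + 1)) s a).1 hcon (abs_nonneg _) (Real.exp_pos _).le
        _ = Real.exp (Spow β γ C T (k + 1)) * (Real.exp (|γ| * C * β ^ T) - 1) := by
            rw [Spow_succ, Real.exp_add]; ring

lemma dist_JT_succ (hp : IsTransKer m n p) (hπ : ∀ t, IsStoch m n (π t))
    (hβ0 : 0 < β) (hβ1 : β < 1) (hC : 0 < C) (hR : ∀ s a, |R s a| ≤ C)
    (x : Fin m) (T : ℕ) :
    dist (JT β γ p π R T x) (JT β γ p π R (T + 1) x)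
      ≤ Real.exp (|γ| * C / (1 - β)) * (|γ| * C * Real.exp (|γ| * C)) * β ^ T := by
  rcases Nat.eq_zero_or_pos T with hT | hT
  · subst hT
    have h01 : JT β γ p π R 0 x = JT β γ p π R 1 x := rfl
    rw [h01, dist_self]
    positivity
  · rw [Real.dist_eq]
    have hJ1 : JT β γ p π R T x = ∑ a, π 0 x a * Qrev β γ p π R T (T - 1) x a := rfl
    have hJ2 : JT β γ p π R (T + 1) x
        = ∑ a, π 0 x a * Qrev β γ p π R (T + 1) ((T - 1) + 1) x a := by
      have h : T + 1 - 1 - 0 = (T - 1) + 1 := by omega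
      simp only [JT, Qmat, h]
    have hE : ∀ a, |Qrev β γ p π R T (T - 1) x a - Qrev β γ p π R (T + 1) ((T - 1) + 1) x a|
        ≤ Real.exp (Spow β γ C T (T - 1)) * (Real.exp (|γ| * C * β ^ T) - 1) := by
      intro a
      rw [abs_sub_comm]
      exact Qrev_horizon_diff hp hπ hβ0 hβ1 hC hR T (T - 1) x a
    have hmain : |JT β γ p π R T x - JT β γ p π R (T + 1) x|
        ≤ Real.exp (Spow β γ C T (T - 1)) * (Real.exp (|γ| * C * β ^ T) - 1) := by
      rw [hJ1, hJ2, ← Finset.sum_sub_distrib]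
      simp only [← mul_sub]
      exact wavg_abs_le ((hπ 0).1 x) ((hπ 0).2 x) hE
    refine hmain.trans ?_
    have hS := Spow_le (γ := γ) hβ0 hβ1 hC T (T - 1) le_rfl
    set c := |γ| * C * β ^ T with hcdef
    have hc0 : (0:ℝ) ≤ c := by positivity
    have hec : Real.exp c - 1 ≤ c * Real.exp c := by
      have hmul : Real.exp c * (1 - c) ≤ Real.exp c * Real.exp (-c) :=
        mul_le_mul_of_nonneg_left (by linarith [Real.add_one_le_exp (-c)]) (Real.exp_pos c).le
      rw [← Real.exp_add, add_neg_cancel, Real.exp_zero] at hmul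
      nlinarith
    have hcle : c ≤ |γ| * C := by
      have h1 : β ^ T ≤ 1 := pow_le_one₀ hβ0.le hβ1.le
      have h0 : (0:ℝ) ≤ |γ| * C := by positivity
      nlinarith
    have hee : Real.exp c ≤ Real.exp (|γ| * C) := Real.exp_le_exp.mpr hcle
    calc Real.exp (Spow β γ C T (T - 1)) * (Real.exp c - 1)
        ≤ Real.exp (|γ| * C / (1 - β)) * (c * Real.exp (|γ| * C)) := by
          refine mul_le_mul (Real.exp_le_exp.mpr hS) ?_ (by linarith [Real.one_le_exp hc0])
            (Real.exp_pos _).le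
          refine hec.trans ?_
          exact mul_le_mul_of_nonneg_left hee hc0
      _ = Real.exp (|γ| * C / (1 - β)) * (|γ| * C * Real.exp (|γ| * C)) * β ^ T := by
          rw [hcdef]; ring

lemma JT_tendsto (hp : IsTransKer m n p) (hπ : ∀ t, IsStoch m n (π t))
    (hβ0 : 0 < β) (hβ1 : β < 1) (hC : 0 < C) (hR : ∀ s a, |R s a| ≤ C) (x : Fin m) :
    Filter.Tendsto (fun T => JT β γ p π R T x) Filter.atTop (nhds (Jinf β γ p π R x)) := by
  have hdist : ∀ T, dist (JT β γ p π R T x) (JT β γ p π R (T + 1) x)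
      ≤ Real.exp (|γ| * C / (1 - β)) * (|γ| * C * Real.exp (|γ| * C)) * β ^ T :=
    fun T => dist_JT_succ hp hπ hβ0 hβ1 hC hR x T
  have hc : CauchySeq (fun T => JT β γ p π R T x) :=
    cauchySeq_of_le_geometric β _ hβ1 hdist
  obtain ⟨L, hL⟩ := cauchySeq_tendsto_of_complete hc
  have hJ : Jinf β γ p π R x = L := hL.limUnder_eq
  rw [hJ]
  exact hL

lemma JT_tail (hp : IsTransKer m n p) (hπ : ∀ t, IsStoch m n (π t))
    (hβ0 : 0 < β) (hβ1 : β < 1) (hC : 0 < C) (hR : ∀ s a, |R s a| ≤ C) (x : Fin m) (T : ℕ) :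
    dist (JT β γ p π R T x) (Jinf β γ p π R x)
      ≤ Real.exp (|γ| * C / (1 - β)) * (|γ| * C * Real.exp (|γ| * C)) * β ^ T / (1 - β) :=
  dist_le_of_le_geometric_of_tendsto β _ hβ1
    (fun T => dist_JT_succ hp hπ hβ0 hβ1 hC hR x T)
    (JT_tendsto hp hπ hβ0 hβ1 hC hR x) T

end Main2

/-- Recursive bound for policy perturbation of `Qrev`. -/
noncomputable def Gb (B : ℝ) (e : ℕ → ℝ) : ℕ → ℝ
  | 0 => 0
  | k + 1 => Real.exp B * (Gb B e k + Real.exp B * e k)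

lemma Gb_nonneg (B : ℝ) {e : ℕ → ℝ} (he : ∀ k, 0 ≤ e k) : ∀ k, 0 ≤ Gb B e k
  | 0 => le_refl 0
  | k + 1 => by
      have h1 := Gb_nonneg B he k
      have h2 := he k
      have h3 := (Real.exp_pos B).le
      simp only [Gb]
      positivity

lemma Gb_smul (B η : ℝ) (e : ℕ → ℝ) : ∀ k, Gb B (fun j => η * e j) k = η * Gb B e k
  | 0 => by simp [Gb]
  | k + 1 => by
      simp only [Gb, Gb_smul B η e k]
      ring

section Main3

variable {m n : ℕ} {p : Fin m → Fin n → Fin m → ℝ} {β γ C : ℝ}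
  {π π₁ π₂ : ℕ → Matrix (Fin m) (Fin n) ℝ} {R : Matrix (Fin m) (Fin n) ℝ}

lemma Qrev_abs_le (hp : IsTransKer m n p) (hπ : ∀ t, IsStoch m n (π t))
    (hβ0 : 0 < β) (hβ1 : β < 1) (hC : 0 < C) (hR : ∀ s a, |R s a| ≤ C)
    (T k : ℕ) (hk : k ≤ T - 1) (s : Fin m) (a : Fin n) :
    |Qrev β γ p π R T k s a| ≤ Real.exp (|γ| * C / (1 - β)) := by
  have hb := Qrev_bounds (γ := γ) hp hπ hβ0 hC hR T k s a
  have hS := Spow_le (γ := γ) hβ0 hβ1 hC T k hk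
  rw [abs_le]
  constructor
  · have h1 : (0:ℝ) < Qrev β γ p π R T k s a := lt_of_lt_of_le (Real.exp_pos _) hb.1
    linarith [Real.exp_pos (|γ| * C / (1 - β))]
  · exact hb.2.trans (Real.exp_le_exp.mpr hS)

lemma Qrev_policy_diff (hp : IsTransKer m n p)
    (hπ₁ : ∀ t, IsStoch m n (π₁ t)) (hπ₂ : ∀ t, IsStoch m n (π₂ t))
    (hβ0 : 0 < β) (hβ1 : β < 1) (hC : 0 < C) (hR : ∀ s a, |R s a| ≤ C)
    {η δ' : ℝ} (hη : 0 ≤ η) (hδ' : 0 < δ')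
    (hdiff : ∀ t s', ∑ a', |π₁ t s' a' - π₂ t s' a'| ≤ η * (δ' ^ t)⁻¹) (T : ℕ) :
    ∀ k, k ≤ T - 1 → ∀ s a,
      |Qrev β γ p π₁ R T k s a - Qrev β γ p π₂ R T k s a|
        ≤ Gb (|γ| * C / (1 - β)) (fun j => η * (δ' ^ (T - 1 - j))⁻¹) k := by
  set B := |γ| * C / (1 - β) with hBdef
  have hB1 : |γ| * C ≤ B := by
    rw [hBdef, le_div_iff₀ (by linarith : (0:ℝ) < 1 - β)]
    nlinarith [mul_nonneg (mul_nonneg (abs_nonneg γ) hC.le) hβ0.le]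
  intro k
  induction k with
  | zero =>
      intro _ s a
      rw [Qrev_zero_apply, Qrev_zero_apply, sub_self, abs_zero]
      simp [Gb]
  | succ k ih =>
      intro hk s a
      have hk' : k ≤ T - 1 := by omega
      have ihk := ih hk'
      rw [Qrev_succ_apply (π := π₁), Qrev_succ_apply (π := π₂)]
      have h1 : |(∑ s', p s a s' * ∑ a', π₁ (T - 1 - k) s' a' * Qrev β γ p π₁ R T k s' a')
          - ∑ s', p s a s' * ∑ a', π₁ (T - 1 - k) s' a' * Qrev β γ p π₂ R T k s' a'|
          ≤ Gb B (fun j => η * (δ' ^ (T - 1 - j))⁻¹) k :=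
        step_contract hp (hπ₁ (T - 1 - k)) (fun s' a' => ihk s' a') s a
      have h2 : |(∑ s', p s a s' * ∑ a', π₁ (T - 1 - k) s' a' * Qrev β γ p π₂ R T k s' a')
          - ∑ s', p s a s' * ∑ a', π₂ (T - 1 - k) s' a' * Qrev β γ p π₂ R T k s' a'|
          ≤ Real.exp B * (η * (δ' ^ (T - 1 - k))⁻¹) := by
        rw [← Finset.sum_sub_distrib]
        simp only [← mul_sub]
        refine wavg_abs_le (hp.1 s a) (hp.2 s a) fun s' => ?_
        rw [← Finset.sum_sub_distrib]
        simp only [← sub_mul]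
        have hQb : ∀ a', |Qrev β γ p π₂ R T k s' a'| ≤ Real.exp B :=
          fun a' => Qrev_abs_le hp hπ₂ hβ0 hβ1 hC hR T k hk' s' a'
        calc |∑ a', (π₁ (T - 1 - k) s' a' - π₂ (T - 1 - k) s' a') * Qrev β γ p π₂ R T k s' a'|
            ≤ ∑ a', |π₁ (T - 1 - k) s' a' - π₂ (T - 1 - k) s' a'| * Real.exp B := by
              refine (Finset.abs_sum_le_sum_abs _ _).trans (Finset.sum_le_sum fun a' _ => ?_)
              rw [abs_mul]
              exact mul_le_mul_of_nonneg_left (hQb a') (abs_nonneg _)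
          _ = (∑ a', |π₁ (T - 1 - k) s' a' - π₂ (T - 1 - k) s' a'|) * Real.exp B := by
              rw [Finset.sum_mul]
          _ ≤ (η * (δ' ^ (T - 1 - k))⁻¹) * Real.exp B :=
              mul_le_mul_of_nonneg_right (hdiff (T - 1 - k) s') (Real.exp_pos _).le
          _ = Real.exp B * (η * (δ' ^ (T - 1 - k))⁻¹) := by ring
      have htri : |(∑ s', p s a s' * ∑ a', π₁ (T - 1 - k) s' a' * Qrev β γ p π₁ R T k s' a')
          - ∑ s', p s a s' * ∑ a', π₂ (T - 1 - k) s' a' * Qrev β γ p π₂ R T k s' a'|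
          ≤ Gb B (fun j => η * (δ' ^ (T - 1 - j))⁻¹) k
            + Real.exp B * (η * (δ' ^ (T - 1 - k))⁻¹) :=
        (abs_sub_le _ _ _).trans (add_le_add h1 h2)
      have hgle : Real.exp (γ * β ^ (T - 1 - (k + 1)) * R s a) ≤ Real.exp B := by
        refine (exp_term_bounds (γ := γ) (C := C) (R := R) hβ0 hC hR
          (T - 1 - (k + 1)) s a).1.trans (Real.exp_le_exp.mpr ?_)
        have hp1 : β ^ (T - 1 - (k + 1)) ≤ 1 := pow_le_one₀ hβ0.le hβ1.le
        have h0 : (0:ℝ) ≤ |γ| * C := by positivity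
        nlinarith
      calc |Real.exp (γ * β ^ (T - 1 - (k + 1)) * R s a) *
              (∑ s', p s a s' * ∑ a', π₁ (T - 1 - k) s' a' * Qrev β γ p π₁ R T k s' a')
            - Real.exp (γ * β ^ (T - 1 - (k + 1)) * R s a) *
              (∑ s', p s a s' * ∑ a', π₂ (T - 1 - k) s' a' * Qrev β γ p π₂ R T k s' a')|
          = Real.exp (γ * β ^ (T - 1 - (k + 1)) * R s a) *
              |(∑ s', p s a s' * ∑ a', π₁ (T - 1 - k) s' a' * Qrev β γ p π₁ R T k s' a')
              - ∑ s', p s a s' * ∑ a', π₂ (T - 1 - k) s' a' * Qrev β γ p π₂ R T k s' a'| := by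
            rw [← mul_sub, abs_mul, abs_of_pos (Real.exp_pos _)]
        _ ≤ Real.exp B * (Gb B (fun j => η * (δ' ^ (T - 1 - j))⁻¹) k
              + Real.exp B * (η * (δ' ^ (T - 1 - k))⁻¹)) :=
            mul_le_mul hgle htri (abs_nonneg _) (Real.exp_pos _).le
        _ = Gb B (fun j => η * (δ' ^ (T - 1 - j))⁻¹) (k + 1) := rfl

lemma JT_policy_diff (hp : IsTransKer m n p)
    (hπ₁ : ∀ t, IsStoch m n (π₁ t)) (hπ₂ : ∀ t, IsStoch m n (π₂ t))
    (hβ0 : 0 < β) (hβ1 : β < 1) (hC : 0 < C) (hR : ∀ s a, |R s a| ≤ C)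
    {η δ' : ℝ} (hη : 0 ≤ η) (hδ' : 0 < δ')
    (hdiff : ∀ t s', ∑ a', |π₁ t s' a' - π₂ t s' a'| ≤ η * (δ' ^ t)⁻¹)
    (T : ℕ) (x : Fin m) :
    |JT β γ p π₁ R T x - JT β γ p π₂ R T x|
      ≤ η * Real.exp (|γ| * C / (1 - β))
        + Gb (|γ| * C / (1 - β)) (fun j => η * (δ' ^ (T - 1 - j))⁻¹) (T - 1) := by
  set B := |γ| * C / (1 - β) with hBdef
  have hJ1 : JT β γ p π₁ R T x = ∑ a, π₁ 0 x a * Qrev β γ p π₁ R T (T - 1) x a := rfl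
  have hJ2 : JT β γ p π₂ R T x = ∑ a, π₂ 0 x a * Qrev β γ p π₂ R T (T - 1) x a := rfl
  have hQd := Qrev_policy_diff (γ := γ) hp hπ₁ hπ₂ hβ0 hβ1 hC hR hη hδ' hdiff T (T - 1) le_rfl
  have hQb : ∀ a, |Qrev β γ p π₁ R T (T - 1) x a| ≤ Real.exp B :=
    fun a => Qrev_abs_le hp hπ₁ hβ0 hβ1 hC hR T (T - 1) le_rfl x a
  rw [hJ1, hJ2, ← Finset.sum_sub_distrib]
  have hsplit : ∀ a : Fin n, π₁ 0 x a * Qrev β γ p π₁ R T (T - 1) x a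
      - π₂ 0 x a * Qrev β γ p π₂ R T (T - 1) x a
      = (π₁ 0 x a - π₂ 0 x a) * Qrev β γ p π₁ R T (T - 1) x a
        + π₂ 0 x a * (Qrev β γ p π₁ R T (T - 1) x a - Qrev β γ p π₂ R T (T - 1) x a) :=
    fun a => by ring
  rw [Finset.sum_congr rfl (fun a _ => hsplit a), Finset.sum_add_distrib]
  refine (abs_add_le _ _).trans (add_le_add ?_ ?_)
  · calc |∑ a, (π₁ 0 x a - π₂ 0 x a) * Qrev β γ p π₁ R T (T - 1) x a|
        ≤ ∑ a, |π₁ 0 x a - π₂ 0 x a| * Real.exp B := by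
          refine (Finset.abs_sum_le_sum_abs _ _).trans (Finset.sum_le_sum fun a _ => ?_)
          rw [abs_mul]
          exact mul_le_mul_of_nonneg_left (hQb a) (abs_nonneg _)
      _ = (∑ a, |π₁ 0 x a - π₂ 0 x a|) * Real.exp B := by rw [Finset.sum_mul]
      _ ≤ (η * (δ' ^ (0:ℕ))⁻¹) * Real.exp B :=
          mul_le_mul_of_nonneg_right (hdiff 0 x) (Real.exp_pos _).le
      _ = η * Real.exp B := by simp
  · exact wavg_abs_le ((hπ₂ 0).1 x) ((hπ₂ 0).2 x) fun a => hQd x a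

end Main3

/-- the map `π ↦ J(π,γ,R)` (the infinite-horizon risk-sensitive cost, which
exists as the limit of the finite-horizon costs) is uniformly continuous from `(Π_MR, μ)`
to `(ℝ^m, ‖·‖_∞)`. -/
theorem stmt_13 (m n : ℕ) (hm : 1 ≤ m) (hn : 1 ≤ n)
    (p : Fin m → Fin n → Fin m → ℝ) (hp : IsTransKer m n p)
    (β : ℝ) (hβ0 : 0 < β) (hβ1 : β < 1)
    (γ : ℝ) (hγ : γ ≠ 0)
    (C : ℝ) (hC : 0 < C)
    (δ : ℝ) (hδ : β < δ) (hδ1 : δ < 1)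
    (R : Matrix (Fin m) (Fin n) ℝ) (hR : ∀ s a, |R s a| ≤ C) :
    (∀ π : ℕ → Matrix (Fin m) (Fin n) ℝ, (∀ t, IsStoch m n (π t)) → ∀ x,
      Filter.Tendsto (fun T => JT β γ p π R T x) Filter.atTop (nhds (Jinf β γ p π R x))) ∧
    ∀ ε > (0 : ℝ), ∃ η > (0 : ℝ), ∀ π₁ π₂ : ℕ → Matrix (Fin m) (Fin n) ℝ,
      (∀ t, IsStoch m n (π₁ t)) → (∀ t, IsStoch m n (π₂ t)) →
      policyDist δ π₁ π₂ < η →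
      vecNorm (fun x => Jinf β γ p π₁ R x - Jinf β γ p π₂ R x) < ε := by
  
  constructor
  · intro π hπst x
    exact JT_tendsto (γ := γ) hp hπst hβ0 hβ1 hC hR x
  · intro ε hε
    have hγ0 : 0 < |γ| := abs_pos.mpr hγ
    have hδ0 : 0 < δ := hβ0.trans hδ
    have h1β : (0:ℝ) < 1 - β := by linarith
    set B : ℝ := |γ| * C / (1 - β) with hBdef
    set K : ℝ := Real.exp B * (|γ| * C * Real.exp (|γ| * C)) with hKdef
    have hK0 : 0 < K := by rw [hKdef]; positivity
    -- choose the horizon T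
    have hten : Filter.Tendsto (fun T : ℕ => K * β ^ T / (1 - β)) Filter.atTop (nhds 0) := by
      have h := tendsto_pow_atTop_nhds_zero_of_lt_one hβ0.le hβ1
      have h2 := (h.const_mul K).div_const (1 - β)
      simpa using h2
    obtain ⟨T, hT⟩ := (hten.eventually (gt_mem_nhds (by linarith : (0:ℝ) < ε / 4))).exists
    set e0 : ℕ → ℝ := fun j => (δ ^ (T - 1 - j))⁻¹ with he0def
    have he0 : ∀ k, 0 ≤ e0 k := fun k => by positivity
    set M : ℝ := Real.exp B + Gb B e0 (T - 1) with hMdef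
    have hM0 : 0 < M := add_pos_of_pos_of_nonneg (Real.exp_pos _) (Gb_nonneg B he0 _)
    refine ⟨ε / (4 * M), by positivity, ?_⟩
    intro π₁ π₂ hπ₁ hπ₂ hpd
    set η : ℝ := ε / (4 * M) with hηdef
    have hη0 : 0 ≤ η := by positivity
    have i0 : Fin m := ⟨0, hm⟩
    haveI : Nonempty (Fin m) := ⟨i0⟩
    -- entrywise row bound from the policy distance
    have hdiff : ∀ t s', ∑ a', |π₁ t s' a' - π₂ t s' a'| ≤ η * (δ ^ t)⁻¹ := by
      intro t s'
      have hrs_nonneg : ∀ u, 0 ≤ rowSumNorm (π₁ u - π₂ u) := by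
        intro u
        refine le_trans (Finset.sum_nonneg fun j _ => abs_nonneg _)
          (le_fin_ciSup (fun i => ∑ j, |(π₁ u - π₂ u) i j|) i0)
      have hb2 : ∀ u, δ ^ u * rowSumNorm (π₁ u - π₂ u) ≤ 2 := by
        intro u
        have hrs : rowSumNorm (π₁ u - π₂ u) ≤ 2 := by
          refine ciSup_le fun i => ?_
          calc ∑ j, |(π₁ u - π₂ u) i j| ≤ ∑ j, (π₁ u i j + π₂ u i j) := by
                refine Finset.sum_le_sum fun j _ => ?_
                rw [Matrix.sub_apply]
                refine (abs_sub _ _).trans ?_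
                rw [abs_of_nonneg ((hπ₁ u).1 i j), abs_of_nonneg ((hπ₂ u).1 i j)]
            _ = 2 := by
                rw [Finset.sum_add_distrib, (hπ₁ u).2 i, (hπ₂ u).2 i]; norm_num
        have h1 : δ ^ u ≤ 1 := pow_le_one₀ hδ0.le hδ1.le
        nlinarith [hrs_nonneg u, pow_nonneg hδ0.le u]
      have hle : δ ^ t * rowSumNorm (π₁ t - π₂ t) ≤ policyDist δ π₁ π₂ := by
        unfold policyDist
        refine le_ciSup (f := fun u : ℕ => δ ^ u * rowSumNorm (π₁ u - π₂ u)) ⟨2, ?_⟩ t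
        rintro y ⟨u, rfl⟩
        exact hb2 u
      have hrow : ∑ a', |π₁ t s' a' - π₂ t s' a'| ≤ rowSumNorm (π₁ t - π₂ t) := by
        have h := le_fin_ciSup (fun i => ∑ j, |(π₁ t - π₂ t) i j|) s'
        simpa [rowSumNorm, Matrix.sub_apply] using h
      have hmain : (∑ a', |π₁ t s' a' - π₂ t s' a'|) * δ ^ t ≤ η := by
        have := le_trans (mul_le_mul_of_nonneg_left hrow (pow_nonneg hδ0.le t))
          (hle.trans hpd.le)
        nlinarith [this]
      have := (le_div_iff₀ (pow_pos hδ0 t)).mpr hmain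
      rwa [div_eq_mul_inv] at this
    -- per-coordinate estimate
    have hbound : ∀ x, |Jinf β γ p π₁ R x - Jinf β γ p π₂ R x| ≤ ε / 4 + ε / 4 + ε / 4 := by
      intro x
      have t1 := JT_tail (γ := γ) hp hπ₁ hβ0 hβ1 hC hR x T
      have t2 := JT_tail (γ := γ) hp hπ₂ hβ0 hβ1 hC hR x T
      rw [Real.dist_eq] at t1 t2
      have tm := JT_policy_diff (γ := γ) hp hπ₁ hπ₂ hβ0 hβ1 hC hR hη0 hδ0 hdiff T x
      have tmM : η * Real.exp B + Gb B (fun j => η * e0 j) (T - 1) = η * M := by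
        rw [Gb_smul, hMdef]; ring
      have tm' : |JT β γ p π₁ R T x - JT β γ p π₂ R T x| ≤ η * M := by
        rw [← tmM]; exact tm
      have hηM : η * M ≤ ε / 4 := by
        rw [hηdef]
        rw [div_mul_eq_mul_div, mul_comm]
        rw [div_le_div_iff₀ (by positivity) (by norm_num)]
        nlinarith [hM0]
      have htail : K * β ^ T / (1 - β) ≤ ε / 4 := hT.le
      have tri1 := abs_sub_le (Jinf β γ p π₁ R x) (JT β γ p π₁ R T x) (Jinf β γ p π₂ R x)
      have tri2 := abs_sub_le (JT β γ p π₁ R T x) (JT β γ p π₂ R T x) (Jinf β γ p π₂ R x)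
      have c1 : |Jinf β γ p π₁ R x - JT β γ p π₁ R T x| ≤ ε / 4 := by
        rw [abs_sub_comm]; exact t1.trans htail
      have c2 : |JT β γ p π₂ R T x - Jinf β γ p π₂ R x| ≤ ε / 4 := t2.trans htail
      calc |Jinf β γ p π₁ R x - Jinf β γ p π₂ R x|
          ≤ |Jinf β γ p π₁ R x - JT β γ p π₁ R T x|
            + |JT β γ p π₁ R T x - JT β γ p π₂ R T x|
            + |JT β γ p π₂ R T x - Jinf β γ p π₂ R x| := by linarith
        _ ≤ ε / 4 + ε / 4 + ε / 4 := by
            refine add_le_add (add_le_add c1 (tm'.trans hηM)) c2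
    have hfin : vecNorm (fun x => Jinf β γ p π₁ R x - Jinf β γ p π₂ R x)
        ≤ ε / 4 + ε / 4 + ε / 4 := ciSup_le fun x => hbound x
    exact lt_of_le_of_lt hfin (by linarith)
end

section
/- Let b ∈ ℝ, let R ∈ ℝ^{m×n} have every entry of absolute value at most C, let K := C/(1−β), fix a state x, and for each T ≥ 1 define A_T := {π ∈ Π_MR : V_T(π,R)(x) ≤ b − Kβ^T} and B_T := {π ∈ Π_MR : J_T(π,γ,R)(x) ≤ b · exp(−|γ|Kβ^T)}. Then (A_T)_{T≥1} and (B_T)_{T≥1} are non-decreasing sequences of nested sets (A_T ⊆ A_{T+1} and B_T ⊆ B_{T+1} for all T), every π ∈ A_T satisfies V(π,R)(x) ≤ b, and every π ∈ B_T satisfies J(π,γ,R)(x) ≤ b, where J(π,γ,R)(x) := lim_{T'→∞} J_{T'}(π,γ,R)(x) (this limit exists). -/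
open Finset Filter Matrix

/-! With `|R| ≤ C`, the step-`t` term changes the discounted cost by at most `C β ^ t`, and it
changes the risk-sensitive cost by a factor at most `exp (|γ| C β ^ t)`: passing from horizon `T`
to `T + 1` only inserts, at the end of the backward recursion for `Q`, the conditional expectation
of `exp (γ β ^ T R)`. Since `∑_{t ≥ T} C β ^ t = K β ^ T`, both `V_T + K β ^ T` and
`J_T · exp (|γ| K β ^ T)` are non-increasing in `T`. The latter is nonnegative, so it converges,
and so does `J_T`; each of the two sequences dominates its limit (`V`, resp. `J`), which gives the
nesting of `A_T`, `B_T` and the bounds `V ≤ b`, `J ≤ b`. -/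

section WeightedAverage

variable {ι : Type*} [Fintype ι] {w v v' : ι → ℝ} {c : ℝ}

lemma sum_mul_le_of_forall_le (hw0 : ∀ i, 0 ≤ w i) (hw1 : ∑ i, w i = 1) (hv : ∀ i, v i ≤ c) :
    ∑ i, w i * v i ≤ c :=
  calc ∑ i, w i * v i ≤ ∑ i, w i * c :=
        sum_le_sum fun i _ => mul_le_mul_of_nonneg_left (hv i) (hw0 i)
    _ = c := by rw [← sum_mul, hw1, one_mul]

lemma le_sum_mul_of_forall_le (hw0 : ∀ i, 0 ≤ w i) (hw1 : ∑ i, w i = 1) (hv : ∀ i, c ≤ v i) :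
    c ≤ ∑ i, w i * v i :=
  calc c = ∑ i, w i * c := by rw [← sum_mul, hw1, one_mul]
    _ ≤ ∑ i, w i * v i := sum_le_sum fun i _ => mul_le_mul_of_nonneg_left (hv i) (hw0 i)

lemma abs_sum_mul_le_of_forall_abs_le (hw0 : ∀ i, 0 ≤ w i) (hw1 : ∑ i, w i = 1)
    (hv : ∀ i, |v i| ≤ c) : |∑ i, w i * v i| ≤ c :=
  abs_le.2 ⟨le_sum_mul_of_forall_le hw0 hw1 fun i => (abs_le.1 (hv i)).1,
    sum_mul_le_of_forall_le hw0 hw1 fun i => (abs_le.1 (hv i)).2⟩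

lemma sum_mul_le_mul_sum_mul (hw0 : ∀ i, 0 ≤ w i) (hv : ∀ i, v i ≤ c * v' i) :
    ∑ i, w i * v i ≤ c * ∑ i, w i * v' i :=
  calc ∑ i, w i * v i ≤ ∑ i, w i * (c * v' i) :=
        sum_le_sum fun i _ => mul_le_mul_of_nonneg_left (hv i) (hw0 i)
    _ = c * ∑ i, w i * v' i := by rw [mul_sum]; exact sum_congr rfl fun i _ => by ring

end WeightedAverage

lemma div_one_sub_mul_pow_sub_mul_pow_succ {β C : ℝ} (hβ1 : β ≠ 1) (T : ℕ) :
    C / (1 - β) * β ^ T - C / (1 - β) * β ^ (T + 1) = C * β ^ T := by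
  field_simp [sub_ne_zero.2 hβ1.symm]
  ring

lemma tsum_le_sum_range_add_of_abs_le {a : ℕ → ℝ} {β C : ℝ} (hβ0 : 0 ≤ β) (hβ1 : β < 1)
    (ha : ∀ t, |a t| ≤ C * β ^ t) (T : ℕ) :
    ∑' t, a t ≤ ∑ t ∈ range T, a t + C / (1 - β) * β ^ T := by
  have hgeom : Summable fun t : ℕ => C * β ^ T * β ^ t :=
    (summable_geometric_of_lt_one hβ0 hβ1).mul_left _
  have htail_le : ∀ t, a (t + T) ≤ C * β ^ T * β ^ t := fun t =>
    (le_abs_self _).trans ((ha (t + T)).trans_eq (by ring))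
  have htail : Summable fun t => a (t + T) :=
    hgeom.of_norm_bounded fun t => (ha (t + T)).trans_eq (by ring)
  rw [← (summable_nat_add_iff T).1 htail |>.sum_add_tsum_nat_add T]
  gcongr
  calc ∑' t, a (t + T) ≤ ∑' t, C * β ^ T * β ^ t := htail.tsum_le_tsum htail_le hgeom
    _ = C / (1 - β) * β ^ T := by
      rw [tsum_mul_left, tsum_geometric_of_lt_one hβ0 hβ1, div_eq_mul_inv]; ring

lemma le_mul_exp_neg_iff {x b c : ℝ} : x ≤ b * Real.exp (-c) ↔ x * Real.exp c ≤ b := by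
  rw [Real.exp_neg, ← div_eq_mul_inv, le_div_iff₀ (Real.exp_pos c)]

lemma exists_tendsto_of_antitone_mul_exp {u c : ℕ → ℝ} (hu : ∀ T, 0 ≤ u T)
    (hc : Tendsto c atTop (nhds 0)) (hanti : Antitone fun T => u T * Real.exp (c T)) :
    ∃ L, Tendsto u atTop (nhds L) := by
  have hbdd : BddBelow (Set.range fun T => u T * Real.exp (c T)) :=
    ⟨0, by rintro _ ⟨T, rfl⟩; exact mul_nonneg (hu T) (Real.exp_pos _).le⟩
  have hexp : Tendsto (fun T => Real.exp (-c T)) atTop (nhds 1) := by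
    simpa [Function.comp_def] using (Real.continuous_exp.tendsto _).comp hc.neg
  exact ⟨_, by simpa [mul_assoc, ← Real.exp_add] using (tendsto_atTop_ciInf hanti hbdd).mul hexp⟩

lemma tendsto_exp_mul_pow_nhds_one {β : ℝ} (hβ0 : 0 ≤ β) (hβ1 : β < 1) (c : ℝ) :
    Tendsto (fun T : ℕ => Real.exp (c * β ^ T)) atTop (nhds 1) := by
  simpa [Function.comp_def] using (Real.continuous_exp.tendsto _).comp
    ((tendsto_pow_atTop_nhds_zero_of_lt_one hβ0 hβ1).const_mul c)

section MarkovDecisionProcess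

variable {m n : ℕ} {p : Fin m → Fin n → Fin m → ℝ} {π : ℕ → Matrix (Fin m) (Fin n) ℝ}
  {R : Matrix (Fin m) (Fin n) ℝ} {β γ C : ℝ}

lemma pmat_mem_rowStochastic (hp : IsTransKer m n p) {d : Matrix (Fin m) (Fin n) ℝ}
    (hd : IsStoch m n d) : Pmat p d ∈ rowStochastic ℝ (Fin m) := by
  refine mem_rowStochastic_iff_sum.2
    ⟨fun s s' => sum_nonneg fun a _ => mul_nonneg (hp.1 s a s') (hd.1 s a), fun s => ?_⟩
  simp only [Pmat]
  rw [sum_comm]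
  simp only [← sum_mul, hp.2, one_mul, hd.2]

lemma ppi_mem_rowStochastic (hp : IsTransKer m n p) (hπ : ∀ t, IsStoch m n (π t)) (t : ℕ) :
    Ppi p π t ∈ rowStochastic ℝ (Fin m) := by
  induction t with
  | zero => exact one_mem _
  | succ t ih => exact mul_mem ih (pmat_mem_rowStochastic hp (hπ t))

lemma abs_rvec_le (hR : ∀ s a, |R s a| ≤ C) {d : Matrix (Fin m) (Fin n) ℝ} (hd : IsStoch m n d)
    (s : Fin m) : |Rvec R d s| ≤ C := by
  simp only [Rvec, mul_comm (R s _)]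
  exact abs_sum_mul_le_of_forall_abs_le (hd.1 s) (hd.2 s) (hR s)

lemma abs_discounted_cost_le (hp : IsTransKer m n p) (hπ : ∀ t, IsStoch m n (π t))
    (hβ0 : 0 ≤ β) (hR : ∀ s a, |R s a| ≤ C) (t : ℕ) (x : Fin m) :
    |β ^ t * (Ppi p π t *ᵥ Rvec R (π t)) x| ≤ C * β ^ t := by
  have hP := ppi_mem_rowStochastic hp hπ t
  have hcost : |(Ppi p π t *ᵥ Rvec R (π t)) x| ≤ C :=
    abs_sum_mul_le_of_forall_abs_le (fun _ => nonneg_of_mem_rowStochastic hP)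
      (sum_row_of_mem_rowStochastic hP x) (abs_rvec_le hR (hπ t))
  rw [abs_mul, abs_of_nonneg (pow_nonneg hβ0 t), mul_comm C]
  exact mul_le_mul_of_nonneg_left hcost (pow_nonneg hβ0 t)

lemma vt_succ_add_le (hp : IsTransKer m n p) (hπ : ∀ t, IsStoch m n (π t))
    (hβ0 : 0 ≤ β) (hβ1 : β < 1) (hR : ∀ s a, |R s a| ≤ C) (T : ℕ) (x : Fin m) :
    VT β p π R (T + 1) x + C / (1 - β) * β ^ (T + 1) ≤ VT β p π R T x + C / (1 - β) * β ^ T := by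
  have hstep : VT β p π R (T + 1) x = VT β p π R T x + β ^ T * (Ppi p π T *ᵥ Rvec R (π T)) x :=
    sum_range_succ _ _
  have hcost := (abs_le.1 (abs_discounted_cost_le hp hπ hβ0 hR T x)).2
  have := div_one_sub_mul_pow_sub_mul_pow_succ (C := C) hβ1.ne T
  linarith

lemma vinf_le_vt_add (hp : IsTransKer m n p) (hπ : ∀ t, IsStoch m n (π t))
    (hβ0 : 0 ≤ β) (hβ1 : β < 1) (hR : ∀ s a, |R s a| ≤ C) (T : ℕ) (x : Fin m) :
    Vinf β p π R x ≤ VT β p π R T x + C / (1 - β) * β ^ T :=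
  tsum_le_sum_range_add_of_abs_le hβ0 hβ1 (fun t => abs_discounted_cost_le hp hπ hβ0 hR t x) T

noncomputable def expectNext (p : Fin m → Fin n → Fin m → ℝ) (d Q : Matrix (Fin m) (Fin n) ℝ) :
    Matrix (Fin m) (Fin n) ℝ :=
  fun s a => ∑ s', p s a s' * ∑ a', d s' a' * Q s' a'

lemma expectNext_nonneg (hp : IsTransKer m n p) {d Q : Matrix (Fin m) (Fin n) ℝ}
    (hd : IsStoch m n d) (hQ : ∀ s a, 0 ≤ Q s a) (s : Fin m) (a : Fin n) :
    0 ≤ expectNext p d Q s a :=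
  sum_nonneg fun s' _ => mul_nonneg (hp.1 s a s') <|
    sum_nonneg fun a' _ => mul_nonneg (hd.1 s' a') (hQ s' a')

lemma expectNext_le (hp : IsTransKer m n p) {d Q : Matrix (Fin m) (Fin n) ℝ}
    (hd : IsStoch m n d) {c : ℝ} (hQ : ∀ s a, Q s a ≤ c) (s : Fin m) (a : Fin n) :
    expectNext p d Q s a ≤ c :=
  sum_mul_le_of_forall_le (hp.1 s a) (hp.2 s a) fun s' =>
    sum_mul_le_of_forall_le (hd.1 s') (hd.2 s') (hQ s')

lemma expectNext_le_mul (hp : IsTransKer m n p) {d Q Q' : Matrix (Fin m) (Fin n) ℝ}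
    (hd : IsStoch m n d) {c : ℝ} (hQ : ∀ s a, Q s a ≤ c * Q' s a) (s : Fin m) (a : Fin n) :
    expectNext p d Q s a ≤ c * expectNext p d Q' s a :=
  sum_mul_le_mul_sum_mul (hp.1 s a) fun s' => sum_mul_le_mul_sum_mul (hd.1 s') (hQ s')

lemma qrev_succ (T k : ℕ) (s : Fin m) (a : Fin n) :
    Qrev β γ p π R T (k + 1) s a =
      Real.exp (γ * β ^ (T - 1 - (k + 1)) * R s a) *
        expectNext p (π (T - 1 - k)) (Qrev β γ p π R T k) s a :=
  rfl

lemma qrev_nonneg (hp : IsTransKer m n p) (hπ : ∀ t, IsStoch m n (π t)) (T k : ℕ) (s : Fin m)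
    (a : Fin n) : 0 ≤ Qrev β γ p π R T k s a := by
  induction k generalizing s a with
  | zero => exact (Real.exp_pos _).le
  | succ k ih =>
    rw [qrev_succ]
    exact mul_nonneg (Real.exp_pos _).le (expectNext_nonneg hp (hπ _) ih s a)

lemma exp_mul_pow_mul_le (hβ0 : 0 ≤ β) {r : ℝ} (hr : |r| ≤ C) (t : ℕ) :
    Real.exp (γ * β ^ t * r) ≤ Real.exp (|γ| * C * β ^ t) := by
  refine Real.exp_le_exp.2 ((le_abs_self _).trans ?_)
  rw [abs_mul, abs_mul, abs_of_nonneg (pow_nonneg hβ0 t), mul_right_comm]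
  exact mul_le_mul_of_nonneg_right (mul_le_mul_of_nonneg_left hr (abs_nonneg γ)) (pow_nonneg hβ0 t)

lemma qrev_succ_succ_le (hp : IsTransKer m n p) (hπ : ∀ t, IsStoch m n (π t)) (hβ0 : 0 ≤ β)
    (hR : ∀ s a, |R s a| ≤ C) (T k : ℕ) (s : Fin m) (a : Fin n) :
    Qrev β γ p π R (T + 1) (k + 1) s a ≤
      Real.exp (|γ| * C * β ^ T) * Qrev β γ p π R T k s a := by
  induction k generalizing s a with
  | zero =>
    have hlast : expectNext p (π T) (Qrev β γ p π R (T + 1) 0) s a ≤ Real.exp (|γ| * C * β ^ T) :=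
      expectNext_le hp (hπ T) (fun s' a' => exp_mul_pow_mul_le hβ0 (hR s' a') T) s a
    rw [qrev_succ, Nat.add_sub_cancel, Nat.sub_zero, mul_comm (Real.exp _)]
    exact mul_le_mul_of_nonneg_right hlast (Real.exp_pos _).le
  | succ k ih =>
    rw [qrev_succ, qrev_succ, Nat.add_sub_cancel, mul_left_comm,
      show T - 1 - (k + 1) = T - (k + 1 + 1) by omega, show T - 1 - k = T - (k + 1) by omega]
    exact mul_le_mul_of_nonneg_left (expectNext_le_mul hp (hπ _) ih s a) (Real.exp_pos _).le

lemma jt_nonneg (hp : IsTransKer m n p) (hπ : ∀ t, IsStoch m n (π t)) (T : ℕ) (x : Fin m) :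
    0 ≤ JT β γ p π R T x :=
  sum_nonneg fun a _ => mul_nonneg ((hπ 0).1 x a) (qrev_nonneg hp hπ T _ x a)

lemma jt_succ_le (hp : IsTransKer m n p) (hπ : ∀ t, IsStoch m n (π t)) (hβ0 : 0 ≤ β)
    (hC : 0 ≤ C) (hR : ∀ s a, |R s a| ≤ C) (T : ℕ) (x : Fin m) :
    JT β γ p π R (T + 1) x ≤ Real.exp (|γ| * C * β ^ T) * JT β γ p π R T x := by
  cases T with
  | zero =>
    -- `T - 1` truncates at `0`, so the horizons `0` and `1` give the same cost.
    have h01 : JT β γ p π R 1 x = JT β γ p π R 0 x := rfl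
    rw [h01]
    exact le_mul_of_one_le_left (jt_nonneg hp hπ 0 x)
      (Real.one_le_exp (by simpa using mul_nonneg (abs_nonneg γ) hC))
  | succ T =>
    exact sum_mul_le_mul_sum_mul (fun a => (hπ 0).1 x a)
      fun a => qrev_succ_succ_le hp hπ hβ0 hR (T + 1) T x a

lemma jt_succ_mul_exp_le (hp : IsTransKer m n p) (hπ : ∀ t, IsStoch m n (π t)) (hβ0 : 0 ≤ β)
    (hβ1 : β < 1) (hC : 0 ≤ C) (hR : ∀ s a, |R s a| ≤ C) (T : ℕ) (x : Fin m) :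
    JT β γ p π R (T + 1) x * Real.exp (|γ| * (C / (1 - β)) * β ^ (T + 1)) ≤
      JT β γ p π R T x * Real.exp (|γ| * (C / (1 - β)) * β ^ T) := by
  have hsplit : |γ| * (C / (1 - β)) * β ^ T =
      |γ| * C * β ^ T + |γ| * (C / (1 - β)) * β ^ (T + 1) := by
    linear_combination |γ| * div_one_sub_mul_pow_sub_mul_pow_succ (C := C) hβ1.ne T
  calc JT β γ p π R (T + 1) x * Real.exp (|γ| * (C / (1 - β)) * β ^ (T + 1))
      ≤ Real.exp (|γ| * C * β ^ T) * JT β γ p π R T x *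
          Real.exp (|γ| * (C / (1 - β)) * β ^ (T + 1)) :=
        mul_le_mul_of_nonneg_right (jt_succ_le hp hπ hβ0 hC hR T x) (Real.exp_pos _).le
    _ = JT β γ p π R T x * Real.exp (|γ| * (C / (1 - β)) * β ^ T) := by
        rw [hsplit, Real.exp_add]; ring

lemma antitone_jt_mul_exp (hp : IsTransKer m n p) (hπ : ∀ t, IsStoch m n (π t)) (hβ0 : 0 ≤ β)
    (hβ1 : β < 1) (hC : 0 ≤ C) (hR : ∀ s a, |R s a| ≤ C) (x : Fin m) :
    Antitone fun T => JT β γ p π R T x * Real.exp (|γ| * (C / (1 - β)) * β ^ T) :=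
  antitone_nat_of_succ_le fun T => jt_succ_mul_exp_le hp hπ hβ0 hβ1 hC hR T x

lemma tendsto_jt_jinf (hp : IsTransKer m n p) (hπ : ∀ t, IsStoch m n (π t)) (hβ0 : 0 ≤ β)
    (hβ1 : β < 1) (hC : 0 ≤ C) (hR : ∀ s a, |R s a| ≤ C) (x : Fin m) :
    Tendsto (fun T => JT β γ p π R T x) atTop (nhds (Jinf β γ p π R x)) :=
  tendsto_nhds_limUnder <| exists_tendsto_of_antitone_mul_exp (jt_nonneg hp hπ · x)
    (by simpa using (tendsto_pow_atTop_nhds_zero_of_lt_one hβ0 hβ1).const_mul _)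
    (antitone_jt_mul_exp hp hπ hβ0 hβ1 hC hR x)

lemma jinf_le_jt_mul_exp (hp : IsTransKer m n p) (hπ : ∀ t, IsStoch m n (π t)) (hβ0 : 0 ≤ β)
    (hβ1 : β < 1) (hC : 0 ≤ C) (hR : ∀ s a, |R s a| ≤ C) (T : ℕ) (x : Fin m) :
    Jinf β γ p π R x ≤ JT β γ p π R T x * Real.exp (|γ| * (C / (1 - β)) * β ^ T) :=
  (antitone_jt_mul_exp hp hπ hβ0 hβ1 hC hR x).le_of_tendsto (by
    simpa using (tendsto_jt_jinf hp hπ hβ0 hβ1 hC hR x).mul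
      (tendsto_exp_mul_pow_nhds_one hβ0 hβ1 (|γ| * (C / (1 - β))))) T

end MarkovDecisionProcess

theorem stmt_14_general (m n : ℕ)
    (p : Fin m → Fin n → Fin m → ℝ) (hp : IsTransKer m n p)
    (β : ℝ) (hβ0 : 0 < β) (hβ1 : β < 1)
    (γ : ℝ)
    (C : ℝ) (hC : 0 < C)
    (R : Matrix (Fin m) (Fin n) ℝ) (hR : ∀ s a, |R s a| ≤ C)
    (b : ℝ) (x : Fin m) :
    (∀ π : ℕ → Matrix (Fin m) (Fin n) ℝ, (∀ t, IsStoch m n (π t)) →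
      Filter.Tendsto (fun T => JT β γ p π R T x) Filter.atTop (nhds (Jinf β γ p π R x))) ∧
    ∀ T : ℕ, 1 ≤ T → ∀ π : ℕ → Matrix (Fin m) (Fin n) ℝ, (∀ t, IsStoch m n (π t)) →
      (VT β p π R T x ≤ b - C / (1 - β) * β ^ T →
        VT β p π R (T + 1) x ≤ b - C / (1 - β) * β ^ (T + 1)) ∧
      (JT β γ p π R T x ≤ b * Real.exp (-(|γ| * (C / (1 - β)) * β ^ T)) →
        JT β γ p π R (T + 1) x ≤ b * Real.exp (-(|γ| * (C / (1 - β)) * β ^ (T + 1)))) ∧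
      (VT β p π R T x ≤ b - C / (1 - β) * β ^ T → Vinf β p π R x ≤ b) ∧
      (JT β γ p π R T x ≤ b * Real.exp (-(|γ| * (C / (1 - β)) * β ^ T)) →
        Jinf β γ p π R x ≤ b) := by
  refine ⟨fun π hπ => tendsto_jt_jinf hp hπ hβ0.le hβ1 hC.le hR x, fun T _ π hπ => ⟨?_, ?_, ?_, ?_⟩⟩
  · intro hA
    linarith [vt_succ_add_le hp hπ hβ0.le hβ1 hR T x]
  · intro hB
    rw [le_mul_exp_neg_iff] at hB ⊢
    exact (jt_succ_mul_exp_le hp hπ hβ0.le hβ1 hC.le hR T x).trans hB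
  · intro hA
    linarith [vinf_le_vt_add hp hπ hβ0.le hβ1 hR T x]
  · intro hB
    rw [le_mul_exp_neg_iff] at hB
    exact (jinf_le_jt_mul_exp hp hπ hβ0.le hβ1 hC.le hR T x).trans hB

/-- the truncated-from-below constraint sets
`A_T = {π : V_T(π,R)(x) ≤ b − Kβ^T}` and `B_T = {π : J_T(π,γ,R)(x) ≤ b·exp(−|γ|Kβ^T)}`
are non-decreasing in `T`, every member of `A_T` satisfies `V(π,R)(x) ≤ b`, and every
member of `B_T` satisfies `J(π,γ,R)(x) ≤ b` (where `J` is the limit of the `J_T`, which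
exists). -/
theorem stmt_14 (m n : ℕ) (hm : 1 ≤ m) (hn : 1 ≤ n)
    (p : Fin m → Fin n → Fin m → ℝ) (hp : IsTransKer m n p)
    (β : ℝ) (hβ0 : 0 < β) (hβ1 : β < 1)
    (γ : ℝ) (hγ : γ ≠ 0)
    (C : ℝ) (hC : 0 < C)
    (R : Matrix (Fin m) (Fin n) ℝ) (hR : ∀ s a, |R s a| ≤ C)
    (b : ℝ) (x : Fin m) :
    (∀ π : ℕ → Matrix (Fin m) (Fin n) ℝ, (∀ t, IsStoch m n (π t)) →
      Filter.Tendsto (fun T => JT β γ p π R T x) Filter.atTop (nhds (Jinf β γ p π R x))) ∧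
    ∀ T : ℕ, 1 ≤ T → ∀ π : ℕ → Matrix (Fin m) (Fin n) ℝ, (∀ t, IsStoch m n (π t)) →
      (VT β p π R T x ≤ b - C / (1 - β) * β ^ T →
        VT β p π R (T + 1) x ≤ b - C / (1 - β) * β ^ (T + 1)) ∧
      (JT β γ p π R T x ≤ b * Real.exp (-(|γ| * (C / (1 - β)) * β ^ T)) →
        JT β γ p π R (T + 1) x ≤ b * Real.exp (-(|γ| * (C / (1 - β)) * β ^ (T + 1)))) ∧
      (VT β p π R T x ≤ b - C / (1 - β) * β ^ T → Vinf β p π R x ≤ b) ∧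
      (JT β γ p π R T x ≤ b * Real.exp (-(|γ| * (C / (1 - β)) * β ^ T)) →
        Jinf β γ p π R x ≤ b) :=
  stmt_14_general m n p hp β hβ0 hβ1 γ C hC R hR b x
end

section
/- Let 𝒰 be a topological space and N ≥ 1 an integer. For each i ∈ {1,…,N}, let (g_{T,i})_{T=1}^∞ be a sequence of real-valued functions on 𝒰 converging pointwise to a continuous function g_i : 𝒰 → ℝ, and let (B_{T,i})_{T=1}^∞ be a sequence of reals converging to B_i. For each T and i set 𝒢_{T,i} := {z ∈ 𝒰 : g_{T,i}(z) ≤ B_{T,i}}, ℋ_T := ∩_{i=1}^N 𝒢_{T,i}, 𝒢_i := {z ∈ 𝒰 : g_i(z) ≤ B_i} and ℋ := ∩_{i=1}^N 𝒢_i. Assume 𝒢_{T,i} ⊆ 𝒢_i for every i and T. Define h : 𝒰 → ℝ by h(z) := max_{i∈{1,…,N}} (g_i(z) − B_i). If 0 is not a local minimum value of h (i.e., there is no point z with h(z) = 0 and an open neighborhood U of z such that h(y) ≥ 0 for all y ∈ U), then the closure of ∪_{T=1}^∞ ℋ_T equals ℋ. -/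
/-- with `g_{T,i} → g_i` pointwise, `B_{T,i} → B_i`,
`𝒢_{T,i} := {g_{T,i} ≤ B_{T,i}} ⊆ 𝒢_i := {g_i ≤ B_i}`, `ℋ_T := ∩_i 𝒢_{T,i}` and
`ℋ := ∩_i 𝒢_i`, if `0` is not a local minimum value of
`h(z) = max_i (g_i(z) − B_i)`, then `closure (∪_T ℋ_T) = ℋ`. -/
theorem stmt_17 {U : Type*} [TopologicalSpace U] (N : ℕ) (hN : 1 ≤ N)
    (g : ℕ → Fin N → U → ℝ) (glim : Fin N → U → ℝ)
    (hcont : ∀ i, Continuous (glim i))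
    (hptwise : ∀ i z, Filter.Tendsto (fun T => g T i z) Filter.atTop (nhds (glim i z)))
    (B : ℕ → Fin N → ℝ) (Blim : Fin N → ℝ)
    (hB : ∀ i, Filter.Tendsto (fun T => B T i) Filter.atTop (nhds (Blim i)))
    (hsub : ∀ T i, {z : U | g T i z ≤ B T i} ⊆ {z : U | glim i z ≤ Blim i})
    (hloc : ¬ ∃ z : U, (⨆ i : Fin N, (glim i z - Blim i)) = 0 ∧
      ∃ O : Set U, IsOpen O ∧ z ∈ O ∧ ∀ y ∈ O, 0 ≤ ⨆ i : Fin N, (glim i y - Blim i)) :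
    closure (⋃ T : ℕ, ⋂ i : Fin N, {z : U | g T i z ≤ B T i}) =
      ⋂ i : Fin N, {z : U | glim i z ≤ Blim i} := by

  have hNE : Nonempty (Fin N) := Fin.pos_iff_nonempty.mp hN
  set S := ⋃ T : ℕ, ⋂ i : Fin N, {z : U | g T i z ≤ B T i} with hS
  have key : ∀ y : U, (∀ i, glim i y < Blim i) → y ∈ S := by
    intro y hy
    have hev : ∀ᶠ T in Filter.atTop, ∀ i : Fin N, g T i y < B T i := by
      rw [Filter.eventually_all]
      intro i
      have h1 : (glim i y - Blim i) < 0 := by linarith [hy i]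
      have h2 := ((hptwise i y).sub (hB i)).eventually_lt_const h1
      filter_upwards [h2] with T hT
      linarith
    obtain ⟨T, hT⟩ := hev.exists
    exact Set.mem_iUnion.2 ⟨T, Set.mem_iInter.2 fun i => (hT i).le⟩
  apply Set.Subset.antisymm
  · have hclosed : IsClosed (⋂ i : Fin N, {z : U | glim i z ≤ Blim i}) :=
      isClosed_iInter fun i => isClosed_le (hcont i) continuous_const
    exact closure_minimal (Set.iUnion_subset fun T => Set.iInter_mono fun i => hsub T i) hclosed
  · intro z hz
    have hz' : ∀ i, glim i z ≤ Blim i := fun i => Set.mem_iInter.1 hz i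
    by_cases hcase : ∀ i, glim i z < Blim i
    · exact subset_closure (key z hcase)
    · push_neg at hcase
      obtain ⟨i0, hi0⟩ := hcase
      have heq : (⨆ i : Fin N, (glim i z - Blim i)) = 0 := by
        apply le_antisymm
        · exact ciSup_le fun i => by linarith [hz' i]
        · have := le_ciSup (f := fun i => glim i z - Blim i) (Set.Finite.bddAbove (Set.finite_range _)) i0
          simpa using le_trans (by linarith [hz' i0] : (0:ℝ) ≤ glim i0 z - Blim i0) this
      push_neg at hloc
      rw [mem_closure_iff]
      intro O hO hzO
      obtain ⟨y, hyO, hy⟩ := hloc z heq O hO hzO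
      refine ⟨y, hyO, key y fun i => ?_⟩
      have := le_ciSup (f := fun j => glim j y - Blim j) (Set.Finite.bddAbove (Set.finite_range _)) i
      linarith
end

section
/- Suppose the feasible set F is nonempty. Then: (a) there exists η ∈ F attaining inf_{π ∈ F} J(π,γ,R)(x), and for every T ≥ 1 there exists η_T ∈ F_T^+ attaining inf_{π ∈ F_T^+} J_T(π,γ,R)(x). Moreover: (b) if F_{T*}^- is nonempty for some T* ≥ 1 (without assuming F nonempty), then F is nonempty and for every T ≥ T* there exists η_T ∈ F_T^- attaining inf_{π ∈ F_T^-} J_T(π,γ,R)(x). -/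
/-!
The policy space is a countable product of compact sets of stochastic matrices, hence compact,
and every finite-horizon cost `V_T`, `J_T` depends continuously on finitely many decision rules.
Since one-stage costs are bounded by `C`, stage `T` changes `V_T` by at most
`Cβ^T = Kβ^T - Kβ^(T+1)` and `J_T` by a factor between `exp (-|γ|Cβ^T)` and `exp (|γ|Cβ^T)`.
Hence `V_T - Kβ^T` and `J_T / K_T` increase with `T`, while `V_T + Kβ^T` and `J_T K_T` decrease.
The infinite-horizon costs are therefore increasing limits of continuous functions, so lower
semicontinuous; this makes `F` closed, and a lower semicontinuous function attains its minimum on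
a nonempty closed subset of the compact policy space. The same brackets give `F ⊆ F_T^+`,
`F_T^- ⊆ F` and `F_{T*}^- ⊆ F_T^-` for `T* ≤ T`.
-/

open Finset Filter Matrix

section Statement19

variable {m n : ℕ}

/-- The feasible set `F` of the infinite-horizon CRSMDP `(P)`. -/
def Feas (m n : ℕ) (p : Fin m → Fin n → Fin m → ℝ) (β γ : ℝ) (x : Fin m)
    {M Mh Mb Mc : ℕ}
    (CC : Fin M → Matrix (Fin m) (Fin n) ℝ) (Ch : Fin Mh → Matrix (Fin m) (Fin n) ℝ)
    (Cb : Fin Mb → Matrix (Fin m) (Fin n) ℝ) (Cc : Fin Mc → Matrix (Fin m) (Fin n) ℝ)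
    (b : Fin M → ℝ) (bh : Fin Mh → ℝ) (bb : Fin Mb → ℝ) (bc : Fin Mc → ℝ)
    (Tb : Fin Mb → ℕ) (Tc : Fin Mc → ℕ) : Set (ℕ → Matrix (Fin m) (Fin n) ℝ) :=
  {π | (∀ t, IsStoch m n (π t)) ∧
       (∀ i, Vinf β p π (CC i) x ≤ b i) ∧
       (∀ j, Jinf β γ p π (Ch j) x ≤ bh j) ∧
       (∀ k, VT β p π (Cb k) (Tb k) x ≤ bb k) ∧
       (∀ l, JT β γ p π (Cc l) (Tc l) x ≤ bc l)}

/-- The feasible set `F_T^-` of the truncated problem `(P_T^-)`, with `K = C/(1−β)` and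
`K_T = exp(|γ|Kβ^T)`. -/
def FeasMinus (m n : ℕ) (p : Fin m → Fin n → Fin m → ℝ) (β γ C : ℝ) (x : Fin m)
    {M Mh Mb Mc : ℕ}
    (CC : Fin M → Matrix (Fin m) (Fin n) ℝ) (Ch : Fin Mh → Matrix (Fin m) (Fin n) ℝ)
    (Cb : Fin Mb → Matrix (Fin m) (Fin n) ℝ) (Cc : Fin Mc → Matrix (Fin m) (Fin n) ℝ)
    (b : Fin M → ℝ) (bh : Fin Mh → ℝ) (bb : Fin Mb → ℝ) (bc : Fin Mc → ℝ)
    (Tb : Fin Mb → ℕ) (Tc : Fin Mc → ℕ) (T : ℕ) : Set (ℕ → Matrix (Fin m) (Fin n) ℝ) :=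
  {π | (∀ t, IsStoch m n (π t)) ∧
       (∀ i, VT β p π (CC i) T x ≤ b i - C / (1 - β) * β ^ T) ∧
       (∀ j, JT β γ p π (Ch j) T x ≤ bh j / Real.exp (|γ| * (C / (1 - β)) * β ^ T)) ∧
       (∀ k, VT β p π (Cb k) (Tb k) x ≤ bb k) ∧
       (∀ l, JT β γ p π (Cc l) (Tc l) x ≤ bc l)}

/-- The feasible set `F_T^+` of the truncated problem `(P_T^+)`. -/
def FeasPlus (m n : ℕ) (p : Fin m → Fin n → Fin m → ℝ) (β γ C : ℝ) (x : Fin m)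
    {M Mh Mb Mc : ℕ}
    (CC : Fin M → Matrix (Fin m) (Fin n) ℝ) (Ch : Fin Mh → Matrix (Fin m) (Fin n) ℝ)
    (Cb : Fin Mb → Matrix (Fin m) (Fin n) ℝ) (Cc : Fin Mc → Matrix (Fin m) (Fin n) ℝ)
    (b : Fin M → ℝ) (bh : Fin Mh → ℝ) (bb : Fin Mb → ℝ) (bc : Fin Mc → ℝ)
    (Tb : Fin Mb → ℕ) (Tc : Fin Mc → ℕ) (T : ℕ) : Set (ℕ → Matrix (Fin m) (Fin n) ℝ) :=
  {π | (∀ t, IsStoch m n (π t)) ∧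
       (∀ i, VT β p π (CC i) T x ≤ b i + C / (1 - β) * β ^ T) ∧
       (∀ j, JT β γ p π (Ch j) T x ≤ bh j * Real.exp (|γ| * (C / (1 - β)) * β ^ T)) ∧
       (∀ k, VT β p π (Cb k) (Tb k) x ≤ bb k) ∧
       (∀ l, JT β γ p π (Cc l) (Tc l) x ≤ bc l)}


open Topology

/-- The Markovian randomized policies `Π_MR`. -/
def policySet (m n : ℕ) : Set (ℕ → Matrix (Fin m) (Fin n) ℝ) :=
  {π | ∀ t, IsStoch m n (π t)}

theorem isClosed_setOf_isStoch : IsClosed {d : Matrix (Fin m) (Fin n) ℝ | IsStoch m n d} := by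
  simp only [IsStoch, Set.ofPred_and, Set.ofPred_forall]
  exact (isClosed_iInter fun s => isClosed_iInter fun a =>
      isClosed_le continuous_const (by fun_prop)).inter
    (isClosed_iInter fun s => isClosed_eq (by fun_prop) continuous_const)

theorem isCompact_setOf_isStoch : IsCompact {d : Matrix (Fin m) (Fin n) ℝ | IsStoch m n d} := by
  refine (isCompact_univ_pi fun _ => isCompact_univ_pi fun _ =>
    isCompact_Icc (a := (0 : ℝ)) (b := 1)).of_isClosed_subset isClosed_setOf_isStoch fun d hd => ?_
  simp only [Set.mem_univ_pi, Set.mem_Icc]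
  exact fun s a =>
    ⟨hd.1 s a, (hd.2 s).le.trans' <| single_le_sum (fun a _ => hd.1 s a) (mem_univ a)⟩

theorem isCompact_policySet : IsCompact (policySet m n) := by
  have : policySet m n = Set.univ.pi fun _ => {d | IsStoch m n d} := by
    ext π
    simp [policySet]
  exact this ▸ isCompact_univ_pi fun _ => isCompact_setOf_isStoch

theorem IsStoch.abs_sum_mul_le {d : Matrix (Fin m) (Fin n) ℝ} (hd : IsStoch m n d)
    {v : Fin n → ℝ} {C : ℝ} (hv : ∀ a, |v a| ≤ C) (s : Fin m) : |∑ a, d s a * v a| ≤ C :=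
  calc |∑ a, d s a * v a| ≤ ∑ a, d s a * C := by
        refine (abs_sum_le_sum_abs _ _).trans (sum_le_sum fun a _ => ?_)
        rw [abs_mul, abs_of_nonneg (hd.1 s a)]
        exact mul_le_mul_of_nonneg_left (hv a) (hd.1 s a)
    _ = C := by rw [← sum_mul, hd.2 s, one_mul]

theorem isStoch_iff_mem_rowStochastic {P : Matrix (Fin m) (Fin m) ℝ} :
    IsStoch m m P ↔ P ∈ rowStochastic ℝ (Fin m) :=
  mem_rowStochastic_iff_sum.symm

theorem monotone_sub_antitone_add_of_abs_sub_le {a d : ℕ → ℝ}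
    (h : ∀ T, |a (T + 1) - a T| ≤ d T - d (T + 1)) :
    Monotone (fun T => a T - d T) ∧ Antitone (fun T => a T + d T) :=
  ⟨monotone_nat_of_le_succ fun T => by linarith [(abs_le.1 (h T)).1],
    antitone_nat_of_succ_le fun T => by linarith [(abs_le.1 (h T)).2]⟩

theorem monotone_mul_exp_neg_antitone_mul_exp {a d : ℕ → ℝ}
    (h₁ : ∀ T, a (T + 1) ≤ a T * Real.exp (d T - d (T + 1)))
    (h₂ : ∀ T, a T ≤ a (T + 1) * Real.exp (d T - d (T + 1))) :
    Monotone (fun T => a T * Real.exp (-d T)) ∧ Antitone (fun T => a T * Real.exp (d T)) := by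
  refine ⟨monotone_nat_of_le_succ fun T => ?_, antitone_nat_of_succ_le fun T => ?_⟩
  · calc a T * Real.exp (-d T)
        ≤ a (T + 1) * Real.exp (d T - d (T + 1)) * Real.exp (-d T) := by gcongr; exact h₂ T
      _ = a (T + 1) * Real.exp (-d (T + 1)) := by rw [mul_assoc, ← Real.exp_add]; ring_nf
  · calc a (T + 1) * Real.exp (d (T + 1))
        ≤ a T * Real.exp (d T - d (T + 1)) * Real.exp (d (T + 1)) := by gcongr; exact h₁ T
      _ = a T * Real.exp (d T) := by rw [mul_assoc, ← Real.exp_add]; ring_nf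

theorem div_one_sub_mul_pow_sub_succ {β : ℝ} (hβ : β ≠ 1) (D : ℝ) (T : ℕ) :
    D / (1 - β) * β ^ T - D / (1 - β) * β ^ (T + 1) = D * β ^ T := by
  field_simp [sub_ne_zero.2 hβ.symm]
  ring

theorem tendsto_mul_pow_nhds_zero {β : ℝ} (hβ0 : 0 ≤ β) (hβ1 : β < 1) (D : ℝ) :
    Tendsto (fun T : ℕ => D * β ^ T) atTop (𝓝 0) := by
  simpa using (tendsto_pow_atTop_nhds_zero_of_lt_one hβ0 hβ1).const_mul D

theorem tendsto_mul_exp_of_tendsto_zero {a e : ℕ → ℝ} {L : ℝ} (ha : Tendsto a atTop (𝓝 L))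
    (he : Tendsto e atTop (𝓝 0)) : Tendsto (fun T => a T * Real.exp (e T)) atTop (𝓝 L) := by
  simpa using ha.mul ((Real.continuous_exp.tendsto 0).comp he)

theorem lowerSemicontinuousOn_of_monotone_tendsto {X : Type*} [TopologicalSpace X] {s : Set X}
    {g : ℕ → X → ℝ} {f : X → ℝ} (hg : ∀ T, ContinuousOn (g T) s)
    (hmono : ∀ x ∈ s, Monotone fun T => g T x)
    (hlim : ∀ x ∈ s, Tendsto (fun T => g T x) atTop (𝓝 (f x))) : LowerSemicontinuousOn f s := by
  intro x hx y hy
  obtain ⟨T, hT⟩ := ((hlim x hx).eventually_const_lt hy).exists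
  filter_upwards [(hg T x hx).eventually_const_lt hT, self_mem_nhdsWithin] with x' hx' hs
  exact hx'.trans_le ((hmono x' hs).ge_of_tendsto (hlim x' hs) T)

theorem isClosed_setOf_mem_and_forall_le {X ι : Type*} [TopologicalSpace X] {s : Set X}
    (hs : IsClosed s) {f : ι → X → ℝ} (hf : ∀ i, LowerSemicontinuousOn (f i) s) (c : ι → ℝ) :
    IsClosed {x | x ∈ s ∧ ∀ i, f i x ≤ c i} := by
  choose v hv hsv using fun i => lowerSemicontinuousOn_iff_preimage_Iic.1 (hf i) (c i)
  convert hs.inter (isClosed_iInter hv) using 1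
  ext x
  simp only [Set.mem_ofPred_eq, Set.mem_inter_iff, Set.mem_iInter]
  refine and_congr_right fun hx => forall_congr' fun i => ?_
  simpa [hx] using Set.ext_iff.1 (hsv i) x

theorem isClosed_setOf_mem_and_forall_le₄ {X ι₁ ι₂ ι₃ ι₄ : Type*} [TopologicalSpace X]
    {s : Set X} (hs : IsClosed s) {f₁ : ι₁ → X → ℝ} {f₂ : ι₂ → X → ℝ} {f₃ : ι₃ → X → ℝ}
    {f₄ : ι₄ → X → ℝ} (h₁ : ∀ i, LowerSemicontinuousOn (f₁ i) s)
    (h₂ : ∀ i, LowerSemicontinuousOn (f₂ i) s) (h₃ : ∀ i, LowerSemicontinuousOn (f₃ i) s)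
    (h₄ : ∀ i, LowerSemicontinuousOn (f₄ i) s)
    (c₁ : ι₁ → ℝ) (c₂ : ι₂ → ℝ) (c₃ : ι₃ → ℝ) (c₄ : ι₄ → ℝ) :
    IsClosed {x | x ∈ s ∧ (∀ i, f₁ i x ≤ c₁ i) ∧ (∀ i, f₂ i x ≤ c₂ i) ∧
      (∀ i, f₃ i x ≤ c₃ i) ∧ ∀ i, f₄ i x ≤ c₄ i} := by
  convert (((isClosed_setOf_mem_and_forall_le hs h₁ c₁).inter
    (isClosed_setOf_mem_and_forall_le hs h₂ c₂)).inter
    (isClosed_setOf_mem_and_forall_le hs h₃ c₃)).inter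
    (isClosed_setOf_mem_and_forall_le hs h₄ c₄) using 1
  ext x
  simp only [Set.mem_ofPred_eq, Set.mem_inter_iff]
  tauto

theorem exists_forall_le_of_subset_policySet {S : Set (ℕ → Matrix (Fin m) (Fin n) ℝ)}
    (hS : IsClosed S) (hSP : S ⊆ policySet m n) (hne : S.Nonempty)
    {f : (ℕ → Matrix (Fin m) (Fin n) ℝ) → ℝ} (hf : LowerSemicontinuousOn f (policySet m n)) :
    ∃ η ∈ S, ∀ π ∈ S, f η ≤ f π :=
  (hf.mono hSP).exists_isMinOn hne (isCompact_policySet.of_isClosed_subset hS hSP)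

section Costs

variable {p : Fin m → Fin n → Fin m → ℝ} {π : ℕ → Matrix (Fin m) (Fin n) ℝ}
  {R : Matrix (Fin m) (Fin n) ℝ} {β γ C : ℝ}

theorem continuous_Ppi_apply (p : Fin m → Fin n → Fin m → ℝ) (t : ℕ) (s s' : Fin m) :
    Continuous fun π : ℕ → Matrix (Fin m) (Fin n) ℝ => Ppi p π t s s' := by
  induction t generalizing s s' with
  | zero => exact continuous_const
  | succ t ih =>
    simp only [Ppi, Matrix.mul_apply, Pmat]
    fun_prop

theorem continuous_VT_apply (β : ℝ) (p : Fin m → Fin n → Fin m → ℝ)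
    (R : Matrix (Fin m) (Fin n) ℝ) (T : ℕ) (x : Fin m) :
    Continuous fun π : ℕ → Matrix (Fin m) (Fin n) ℝ => VT β p π R T x := by
  simp only [VT, Matrix.mulVec, dotProduct, Rvec]
  have := continuous_Ppi_apply p
  fun_prop

theorem continuous_Qrev_apply (β γ : ℝ) (p : Fin m → Fin n → Fin m → ℝ)
    (R : Matrix (Fin m) (Fin n) ℝ) (T k : ℕ) (s : Fin m) (a : Fin n) :
    Continuous fun π : ℕ → Matrix (Fin m) (Fin n) ℝ => Qrev β γ p π R T k s a := by
  induction k generalizing s a with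
  | zero => exact continuous_const
  | succ k ih =>
    simp only [Qrev]
    fun_prop

theorem continuous_JT_apply (β γ : ℝ) (p : Fin m → Fin n → Fin m → ℝ)
    (R : Matrix (Fin m) (Fin n) ℝ) (T : ℕ) (x : Fin m) :
    Continuous fun π : ℕ → Matrix (Fin m) (Fin n) ℝ => JT β γ p π R T x := by
  simp only [JT, Qmat]
  have := continuous_Qrev_apply β γ p R T
  fun_prop

theorem isStoch_Pmat (hp : IsTransKer m n p) {d : Matrix (Fin m) (Fin n) ℝ}
    (hd : IsStoch m n d) : IsStoch m m (Pmat p d) := by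
  refine ⟨fun s s' => sum_nonneg fun a _ => mul_nonneg (hp.1 s a s') (hd.1 s a), fun s => ?_⟩
  simp only [Pmat]
  rw [sum_comm]
  simp only [← sum_mul, hp.2, one_mul, hd.2]

theorem isStoch_Ppi (hp : IsTransKer m n p) (hπ : π ∈ policySet m n) (t : ℕ) :
    IsStoch m m (Ppi p π t) := by
  rw [isStoch_iff_mem_rowStochastic]
  induction t with
  | zero => exact Submonoid.one_mem _
  | succ t ih =>
    exact Submonoid.mul_mem _ ih (isStoch_iff_mem_rowStochastic.1 (isStoch_Pmat hp (hπ t)))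

theorem abs_Rvec_le {d : Matrix (Fin m) (Fin n) ℝ} (hd : IsStoch m n d)
    (hR : ∀ s a, |R s a| ≤ C) (s : Fin m) : |Rvec R d s| ≤ C := by
  simpa only [Rvec, mul_comm] using hd.abs_sum_mul_le (hR s) s

theorem abs_VT_term_le (hp : IsTransKer m n p) (hβ : 0 ≤ β) (hπ : π ∈ policySet m n)
    (hR : ∀ s a, |R s a| ≤ C) (t : ℕ) (x : Fin m) :
    |β ^ t * (Ppi p π t *ᵥ Rvec R (π t)) x| ≤ C * β ^ t := by
  rw [abs_mul, abs_of_nonneg (pow_nonneg hβ t), mul_comm]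
  gcongr
  exact (isStoch_Ppi hp hπ t).abs_sum_mul_le (abs_Rvec_le (hπ t) hR) x

theorem tendsto_VT_Vinf (hp : IsTransKer m n p) (hβ0 : 0 ≤ β) (hβ1 : β < 1)
    (hπ : π ∈ policySet m n) (hR : ∀ s a, |R s a| ≤ C) (x : Fin m) :
    Tendsto (fun T => VT β p π R T x) atTop (𝓝 (Vinf β p π R x)) :=
  (Summable.of_norm_bounded ((summable_geometric_of_lt_one hβ0 hβ1).mul_left C) fun t =>
    (Real.norm_eq_abs _).trans_le (abs_VT_term_le hp hβ0 hπ hR t x)).hasSum.tendsto_sum_nat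

theorem monotone_VT_sub_antitone_VT_add (hp : IsTransKer m n p) (hβ0 : 0 ≤ β) (hβ1 : β < 1)
    (hπ : π ∈ policySet m n) (hR : ∀ s a, |R s a| ≤ C) (x : Fin m) :
    Monotone (fun T => VT β p π R T x - C / (1 - β) * β ^ T) ∧
      Antitone (fun T => VT β p π R T x + C / (1 - β) * β ^ T) :=
  monotone_sub_antitone_add_of_abs_sub_le fun T => by
    rw [div_one_sub_mul_pow_sub_succ hβ1.ne, VT, VT, sum_range_succ, add_sub_cancel_left]
    exact abs_VT_term_le hp hβ0 hπ hR T x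

theorem abs_Vinf_sub_VT_le (hp : IsTransKer m n p) (hβ0 : 0 ≤ β) (hβ1 : β < 1)
    (hπ : π ∈ policySet m n) (hR : ∀ s a, |R s a| ≤ C) (x : Fin m) (T : ℕ) :
    |Vinf β p π R x - VT β p π R T x| ≤ C / (1 - β) * β ^ T := by
  obtain ⟨hlower, hupper⟩ := monotone_VT_sub_antitone_VT_add hp hβ0 hβ1 hπ hR x
  have htail := tendsto_mul_pow_nhds_zero hβ0 hβ1 (C / (1 - β))
  have hV := tendsto_VT_Vinf hp hβ0 hβ1 hπ hR x
  have h₁ := hlower.ge_of_tendsto (by simpa using hV.sub htail) T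
  have h₂ := hupper.le_of_tendsto (by simpa using hV.add htail) T
  exact abs_le.2 ⟨by linarith, by linarith⟩

theorem lowerSemicontinuousOn_Vinf (hp : IsTransKer m n p) (hβ0 : 0 ≤ β) (hβ1 : β < 1)
    (hR : ∀ s a, |R s a| ≤ C) (x : Fin m) :
    LowerSemicontinuousOn (fun π => Vinf β p π R x) (policySet m n) :=
  lowerSemicontinuousOn_of_monotone_tendsto
    (fun T => ((continuous_VT_apply β p R T x).sub continuous_const).continuousOn)
    (fun π hπ => (monotone_VT_sub_antitone_VT_add hp hβ0 hβ1 hπ hR x).1) fun π hπ => by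
      simpa using (tendsto_VT_Vinf hp hβ0 hβ1 hπ hR x).sub
        (tendsto_mul_pow_nhds_zero hβ0 hβ1 (C / (1 - β)))

/-- `Qrev β γ p π R T (k + 1)` is by definition `riskStep p w (π (T - 1 - k)) (Qrev β γ p π R T k)`
with `w s a = exp (γ β ^ (T - 1 - (k + 1)) R s a)`. -/
def riskStep (p : Fin m → Fin n → Fin m → ℝ) (w d Q : Matrix (Fin m) (Fin n) ℝ) :
    Matrix (Fin m) (Fin n) ℝ :=
  fun s a => w s a * ∑ s', p s a s' * ∑ a', d s' a' * Q s' a'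

theorem riskStep_le_mul (hp : IsTransKer m n p) {w d Q Q' : Matrix (Fin m) (Fin n) ℝ}
    (hw : ∀ s a, 0 ≤ w s a) (hd : IsStoch m n d) {κ : ℝ} (hQ : ∀ s a, Q s a ≤ κ * Q' s a)
    (s : Fin m) (a : Fin n) : riskStep p w d Q s a ≤ κ * riskStep p w d Q' s a :=
  calc riskStep p w d Q s a ≤ w s a * ∑ s', p s a s' * ∑ a', d s' a' * (κ * Q' s' a') := by
        unfold riskStep
        gcongr with s' _ a' _
        · exact hw s a
        · exact hp.1 s a s'
        · exact hd.1 s' a'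
        · exact hQ s' a'
    _ = κ * riskStep p w d Q' s a := by
        simp only [riskStep, mul_sum]
        exact sum_congr rfl fun _ _ => sum_congr rfl fun _ _ => by ring

theorem riskStep_one (hp : IsTransKer m n p) (w : Matrix (Fin m) (Fin n) ℝ)
    {d : Matrix (Fin m) (Fin n) ℝ} (hd : IsStoch m n d) :
    riskStep p w d (fun _ _ => 1) = w := by
  ext s a
  simp [riskStep, hd.2, hp.2]

theorem riskStep_iterate_le_mul (hp : IsTransKer m n p)
    {w d A B : ℕ → Matrix (Fin m) (Fin n) ℝ} (hw : ∀ k s a, 0 ≤ w k s a)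
    (hd : ∀ k, IsStoch m n (d k)) {κ : ℝ}
    (hA : ∀ k, A (k + 1) = riskStep p (w k) (d k) (A k))
    (hB : ∀ k, B (k + 1) = riskStep p (w k) (d k) (B k))
    (h0 : ∀ s a, A 0 s a ≤ κ * B 0 s a) (k : ℕ) : ∀ s a, A k s a ≤ κ * B k s a := by
  induction k with
  | zero => exact h0
  | succ k ih =>
    rw [hA, hB]
    exact riskStep_le_mul hp (hw k) (hd k) ih

theorem Qrev_nonneg (hp : IsTransKer m n p) (hπ : π ∈ policySet m n) (T k : ℕ) :
    ∀ s a, 0 ≤ Qrev β γ p π R T k s a := by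
  induction k with
  | zero => exact fun s a => (Real.exp_pos _).le
  | succ k ih =>
    exact fun s a => mul_nonneg (Real.exp_pos _).le <| sum_nonneg fun s' _ =>
      mul_nonneg (hp.1 s a s') <| sum_nonneg fun a' _ => mul_nonneg ((hπ _).1 s' a') (ih s' a')

theorem JT_eq_sum (T : ℕ) (x : Fin m) :
    JT β γ p π R T x = ∑ a, π 0 x a * Qrev β γ p π R T (T - 1) x a := by
  simp [JT, Qmat]

theorem JT_nonneg (hp : IsTransKer m n p) (hπ : π ∈ policySet m n) (T : ℕ) (x : Fin m) :
    0 ≤ JT β γ p π R T x :=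
  sum_nonneg fun a _ => mul_nonneg ((hπ 0).1 x a) (Qrev_nonneg hp hπ _ _ x a)

/-- The horizons `T + 2` and `T + 1` run through the same backward steps and differ only in the
last stage, whose factor `exp (γ β ^ (T + 1) R)` lies between `exp (-c)` and `exp c`. -/
theorem Qrev_add_two_le_and_le (hp : IsTransKer m n p) (hπ : π ∈ policySet m n) (T : ℕ)
    {c : ℝ} (hc : ∀ s a, |γ * β ^ (T + 1) * R s a| ≤ c) (k : ℕ) (s : Fin m) (a : Fin n) :
    Qrev β γ p π R (T + 2) (k + 1) s a ≤ Real.exp c * Qrev β γ p π R (T + 1) k s a ∧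
      Qrev β γ p π R (T + 1) k s a ≤ Real.exp c * Qrev β γ p π R (T + 2) (k + 1) s a := by
  set w : ℕ → Matrix (Fin m) (Fin n) ℝ := fun k s a => Real.exp (γ * β ^ (T - (k + 1)) * R s a)
  have hw : ∀ k s a, 0 ≤ w k s a := fun _ _ _ => (Real.exp_pos _).le
  have hd : ∀ k, IsStoch m n (π (T - k)) := fun _ => hπ _
  have hlong : ∀ k, Qrev β γ p π R (T + 2) (k + 2) =
      riskStep p (w k) (π (T - k)) (Qrev β γ p π R (T + 2) (k + 1)) := fun k => by
    show riskStep p _ (π (T + 2 - 1 - (k + 1))) _ = _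
    rw [show T + 2 - 1 - (k + 1 + 1) = T - (k + 1) by omega,
      show T + 2 - 1 - (k + 1) = T - k by omega]
  have hshort : ∀ k, Qrev β γ p π R (T + 1) (k + 1) =
      riskStep p (w k) (π (T - k)) (Qrev β γ p π R (T + 1) k) := fun k => rfl
  have hlong_zero : Qrev β γ p π R (T + 2) 1 =
      riskStep p (fun s a => Real.exp (γ * β ^ T * R s a)) (π (T + 1))
        (fun s a => Real.exp (γ * β ^ (T + 1) * R s a)) := rfl
  have hshort_zero : Qrev β γ p π R (T + 1) 0 =
      riskStep p (fun s a => Real.exp (γ * β ^ T * R s a)) (π (T + 1)) (fun _ _ => 1) :=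
    (riskStep_one hp _ (hπ _)).symm
  refine ⟨riskStep_iterate_le_mul (A := fun k => Qrev β γ p π R (T + 2) (k + 1))
      (B := Qrev β γ p π R (T + 1)) hp hw hd hlong hshort ?_ k s a,
    riskStep_iterate_le_mul (A := Qrev β γ p π R (T + 1))
      (B := fun k => Qrev β γ p π R (T + 2) (k + 1)) hp hw hd hshort hlong ?_ k s a⟩
  · rw [hlong_zero, hshort_zero]
    refine riskStep_le_mul hp (fun _ _ => (Real.exp_pos _).le) (hπ _) fun s a => ?_
    rw [mul_one]
    exact Real.exp_le_exp.2 ((le_abs_self _).trans (hc s a))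
  · rw [hlong_zero, hshort_zero]
    refine riskStep_le_mul hp (fun _ _ => (Real.exp_pos _).le) (hπ _) fun s a => ?_
    rw [← Real.exp_add]
    exact Real.one_le_exp (by linarith [neg_abs_le (γ * β ^ (T + 1) * R s a), hc s a])

theorem abs_mul_pow_mul_le (hβ : 0 ≤ β) (hR : ∀ s a, |R s a| ≤ C) (T : ℕ) (s : Fin m)
    (a : Fin n) : |γ * β ^ T * R s a| ≤ |γ| * C * β ^ T := by
  rw [abs_mul, abs_mul, abs_pow, abs_of_nonneg hβ, mul_right_comm]
  gcongr
  exact hR s a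

theorem JT_succ_le_and_le (hp : IsTransKer m n p) (hβ : 0 ≤ β) (hC : 0 ≤ C)
    (hπ : π ∈ policySet m n) (hR : ∀ s a, |R s a| ≤ C) (T : ℕ) (x : Fin m) :
    JT β γ p π R (T + 1) x ≤ JT β γ p π R T x * Real.exp (|γ| * C * β ^ T) ∧
      JT β γ p π R T x ≤ JT β γ p π R (T + 1) x * Real.exp (|γ| * C * β ^ T) := by
  rcases T with _ | T
  · -- `JT … 1` and `JT … 0` coincide by definition, since `0 - 1 = 0` in `ℕ`
    have h := le_mul_of_one_le_right (JT_nonneg (β := β) (γ := γ) (R := R) hp hπ 0 x)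
      (Real.one_le_exp (by positivity : 0 ≤ |γ| * C * β ^ 0))
    exact ⟨h, h⟩
  have hQ := Qrev_add_two_le_and_le hp hπ T (abs_mul_pow_mul_le (γ := γ) hβ hR (T + 1)) T x
  have hsum : ∀ Q Q' : Matrix (Fin m) (Fin n) ℝ,
      (∀ a, Q x a ≤ Real.exp (|γ| * C * β ^ (T + 1)) * Q' x a) →
      ∑ a, π 0 x a * Q x a ≤ (∑ a, π 0 x a * Q' x a) * Real.exp (|γ| * C * β ^ (T + 1)) :=
    fun Q Q' h => by
      rw [sum_mul]
      exact sum_le_sum fun a _ => by nlinarith [(hπ 0).1 x a, h a]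
  rw [JT_eq_sum, JT_eq_sum]
  exact ⟨hsum _ _ fun a => (hQ a).1, hsum _ _ fun a => (hQ a).2⟩

theorem monotone_JT_mul_exp_neg_antitone_JT_mul_exp (hp : IsTransKer m n p) (hβ0 : 0 ≤ β)
    (hβ1 : β < 1) (hC : 0 ≤ C) (hπ : π ∈ policySet m n) (hR : ∀ s a, |R s a| ≤ C)
    (x : Fin m) :
    Monotone (fun T => JT β γ p π R T x * Real.exp (-(|γ| * (C / (1 - β)) * β ^ T))) ∧
      Antitone (fun T => JT β γ p π R T x * Real.exp (|γ| * (C / (1 - β)) * β ^ T)) := by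
  have hgap : ∀ T : ℕ, |γ| * (C / (1 - β)) * β ^ T - |γ| * (C / (1 - β)) * β ^ (T + 1)
      = |γ| * C * β ^ T := fun T => by
    simp only [mul_div_assoc', div_one_sub_mul_pow_sub_succ hβ1.ne]
  refine monotone_mul_exp_neg_antitone_mul_exp (d := fun T => |γ| * (C / (1 - β)) * β ^ T)
    (fun T => ?_) (fun T => ?_)
  · rw [hgap]
    exact (JT_succ_le_and_le hp hβ0 hC hπ hR T x).1
  · rw [hgap]
    exact (JT_succ_le_and_le hp hβ0 hC hπ hR T x).2

theorem tendsto_JT_Jinf (hp : IsTransKer m n p) (hβ0 : 0 ≤ β) (hβ1 : β < 1) (hC : 0 ≤ C)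
    (hπ : π ∈ policySet m n) (hR : ∀ s a, |R s a| ≤ C) (x : Fin m) :
    Tendsto (fun T => JT β γ p π R T x) atTop (𝓝 (Jinf β γ p π R x)) := by
  obtain ⟨hlower, hupper⟩ :=
    monotone_JT_mul_exp_neg_antitone_JT_mul_exp (γ := γ) hp hβ0 hβ1 hC hπ hR x
  have hbdd : BddAbove (Set.range fun T =>
      JT β γ p π R T x * Real.exp (-(|γ| * (C / (1 - β)) * β ^ T))) := by
    refine ⟨JT β γ p π R 0 x * Real.exp (|γ| * (C / (1 - β)) * β ^ 0), ?_⟩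
    rintro _ ⟨T, rfl⟩
    have hε : 0 ≤ |γ| * (C / (1 - β)) * β ^ T := by
      have : 0 < 1 - β := by linarith
      positivity
    refine le_trans ?_ (hupper (Nat.zero_le T))
    exact mul_le_mul_of_nonneg_left (Real.exp_le_exp.2 (by linarith)) (JT_nonneg hp hπ T x)
  have hlim := tendsto_mul_exp_of_tendsto_zero (tendsto_atTop_ciSup hlower hbdd)
    (tendsto_mul_pow_nhds_zero hβ0 hβ1 (|γ| * (C / (1 - β))))
  simp only [mul_assoc, ← Real.exp_add, neg_add_cancel, Real.exp_zero, mul_one] at hlim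
  rwa [Jinf, hlim.limUnder_eq]

theorem JT_le_Jinf_mul_and_Jinf_le_JT_mul (hp : IsTransKer m n p) (hβ0 : 0 ≤ β) (hβ1 : β < 1)
    (hC : 0 ≤ C) (hπ : π ∈ policySet m n) (hR : ∀ s a, |R s a| ≤ C) (x : Fin m) (T : ℕ) :
    JT β γ p π R T x ≤ Jinf β γ p π R x * Real.exp (|γ| * (C / (1 - β)) * β ^ T) ∧
      Jinf β γ p π R x ≤ JT β γ p π R T x * Real.exp (|γ| * (C / (1 - β)) * β ^ T) := by
  obtain ⟨hlower, hupper⟩ :=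
    monotone_JT_mul_exp_neg_antitone_JT_mul_exp (γ := γ) hp hβ0 hβ1 hC hπ hR x
  have hJ := tendsto_JT_Jinf (γ := γ) hp hβ0 hβ1 hC hπ hR x
  have hε := tendsto_mul_pow_nhds_zero hβ0 hβ1 (|γ| * (C / (1 - β)))
  refine ⟨?_, hupper.le_of_tendsto (tendsto_mul_exp_of_tendsto_zero hJ hε) T⟩
  have h := hlower.ge_of_tendsto (tendsto_mul_exp_of_tendsto_zero hJ (by simpa using hε.neg)) T
  rwa [Real.exp_neg, mul_inv_le_iff₀ (Real.exp_pos _)] at h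

theorem lowerSemicontinuousOn_Jinf (hp : IsTransKer m n p) (hβ0 : 0 ≤ β) (hβ1 : β < 1)
    (hC : 0 ≤ C) (hR : ∀ s a, |R s a| ≤ C) (x : Fin m) :
    LowerSemicontinuousOn (fun π => Jinf β γ p π R x) (policySet m n) :=
  lowerSemicontinuousOn_of_monotone_tendsto
    (fun T => ((continuous_JT_apply β γ p R T x).mul continuous_const).continuousOn)
    (fun π hπ => (monotone_JT_mul_exp_neg_antitone_JT_mul_exp hp hβ0 hβ1 hC hπ hR x).1)
    fun π hπ => tendsto_mul_exp_of_tendsto_zero (tendsto_JT_Jinf hp hβ0 hβ1 hC hπ hR x)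
      (by simpa using (tendsto_mul_pow_nhds_zero hβ0 hβ1 (|γ| * (C / (1 - β)))).neg)

end Costs

section Feasibility

variable {p : Fin m → Fin n → Fin m → ℝ} {β γ C : ℝ} {x : Fin m} {M Mh Mb Mc : ℕ}
  {CC : Fin M → Matrix (Fin m) (Fin n) ℝ} {Ch : Fin Mh → Matrix (Fin m) (Fin n) ℝ}
  {Cb : Fin Mb → Matrix (Fin m) (Fin n) ℝ} {Cc : Fin Mc → Matrix (Fin m) (Fin n) ℝ}
  {b : Fin M → ℝ} {bh : Fin Mh → ℝ} {bb : Fin Mb → ℝ} {bc : Fin Mc → ℝ}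
  {Tb : Fin Mb → ℕ} {Tc : Fin Mc → ℕ}

theorem isClosed_Feas (hp : IsTransKer m n p) (hβ0 : 0 ≤ β) (hβ1 : β < 1) (hC : 0 ≤ C)
    (hCC : ∀ i s a, |CC i s a| ≤ C) (hCh : ∀ j s a, |Ch j s a| ≤ C) :
    IsClosed (Feas m n p β γ x CC Ch Cb Cc b bh bb bc Tb Tc) :=
  isClosed_setOf_mem_and_forall_le₄ isCompact_policySet.isClosed
    (fun i => lowerSemicontinuousOn_Vinf hp hβ0 hβ1 (hCC i) x)
    (fun j => lowerSemicontinuousOn_Jinf hp hβ0 hβ1 hC (hCh j) x)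
    (fun k => (continuous_VT_apply β p (Cb k) (Tb k) x).continuousOn.lowerSemicontinuousOn)
    (fun l => (continuous_JT_apply β γ p (Cc l) (Tc l) x).continuousOn.lowerSemicontinuousOn)
    b bh bb bc

theorem isClosed_FeasPlus (T : ℕ) :
    IsClosed (FeasPlus m n p β γ C x CC Ch Cb Cc b bh bb bc Tb Tc T) :=
  isClosed_setOf_mem_and_forall_le₄ isCompact_policySet.isClosed
    (fun i => (continuous_VT_apply β p (CC i) T x).continuousOn.lowerSemicontinuousOn)
    (fun j => (continuous_JT_apply β γ p (Ch j) T x).continuousOn.lowerSemicontinuousOn)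
    (fun k => (continuous_VT_apply β p (Cb k) (Tb k) x).continuousOn.lowerSemicontinuousOn)
    (fun l => (continuous_JT_apply β γ p (Cc l) (Tc l) x).continuousOn.lowerSemicontinuousOn)
    _ _ bb bc

theorem isClosed_FeasMinus (T : ℕ) :
    IsClosed (FeasMinus m n p β γ C x CC Ch Cb Cc b bh bb bc Tb Tc T) :=
  isClosed_setOf_mem_and_forall_le₄ isCompact_policySet.isClosed
    (fun i => (continuous_VT_apply β p (CC i) T x).continuousOn.lowerSemicontinuousOn)
    (fun j => (continuous_JT_apply β γ p (Ch j) T x).continuousOn.lowerSemicontinuousOn)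
    (fun k => (continuous_VT_apply β p (Cb k) (Tb k) x).continuousOn.lowerSemicontinuousOn)
    (fun l => (continuous_JT_apply β γ p (Cc l) (Tc l) x).continuousOn.lowerSemicontinuousOn)
    _ _ bb bc

theorem Feas_subset_FeasPlus (hp : IsTransKer m n p) (hβ0 : 0 ≤ β) (hβ1 : β < 1) (hC : 0 ≤ C)
    (hCC : ∀ i s a, |CC i s a| ≤ C) (hCh : ∀ j s a, |Ch j s a| ≤ C) (T : ℕ) :
    Feas m n p β γ x CC Ch Cb Cc b bh bb bc Tb Tc ⊆
      FeasPlus m n p β γ C x CC Ch Cb Cc b bh bb bc Tb Tc T := by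
  rintro π ⟨hπ, hV, hJ, hVb, hJc⟩
  refine ⟨hπ, fun i => ?_, fun j => ?_, hVb, hJc⟩
  · linarith [(abs_le.1 (abs_Vinf_sub_VT_le hp hβ0 hβ1 hπ (hCC i) x T)).1, hV i]
  · exact (JT_le_Jinf_mul_and_Jinf_le_JT_mul hp hβ0 hβ1 hC hπ (hCh j) x T).1.trans
      (mul_le_mul_of_nonneg_right (hJ j) (Real.exp_pos _).le)

theorem FeasMinus_subset_Feas (hp : IsTransKer m n p) (hβ0 : 0 ≤ β) (hβ1 : β < 1) (hC : 0 ≤ C)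
    (hCC : ∀ i s a, |CC i s a| ≤ C) (hCh : ∀ j s a, |Ch j s a| ≤ C) (T : ℕ) :
    FeasMinus m n p β γ C x CC Ch Cb Cc b bh bb bc Tb Tc T ⊆
      Feas m n p β γ x CC Ch Cb Cc b bh bb bc Tb Tc := by
  rintro π ⟨hπ, hV, hJ, hVb, hJc⟩
  refine ⟨hπ, fun i => ?_, fun j => ?_, hVb, hJc⟩
  · linarith [(abs_le.1 (abs_Vinf_sub_VT_le hp hβ0 hβ1 hπ (hCC i) x T)).2, hV i]
  · exact (JT_le_Jinf_mul_and_Jinf_le_JT_mul hp hβ0 hβ1 hC hπ (hCh j) x T).2.trans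
      ((le_div_iff₀ (Real.exp_pos _)).1 (hJ j))

theorem monotone_FeasMinus (hp : IsTransKer m n p) (hβ0 : 0 ≤ β) (hβ1 : β < 1) (hC : 0 ≤ C)
    (hCC : ∀ i s a, |CC i s a| ≤ C) (hCh : ∀ j s a, |Ch j s a| ≤ C) :
    Monotone (FeasMinus m n p β γ C x CC Ch Cb Cc b bh bb bc Tb Tc) := by
  rintro T₀ T hT π ⟨hπ, hV, hJ, hVb, hJc⟩
  refine ⟨hπ, fun i => ?_, fun j => ?_, hVb, hJc⟩
  · linarith [(monotone_VT_sub_antitone_VT_add hp hβ0 hβ1 hπ (hCC i) x).2 hT, hV i]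
  · have hJj := hJ j
    rw [le_div_iff₀ (Real.exp_pos _)] at hJj ⊢
    exact ((monotone_JT_mul_exp_neg_antitone_JT_mul_exp hp hβ0 hβ1 hC hπ (hCh j) x).2 hT).trans
      hJj

end Feasibility

theorem stmt_19_general (m n : ℕ)
    (p : Fin m → Fin n → Fin m → ℝ) (hp : IsTransKer m n p)
    (β : ℝ) (hβ0 : 0 < β) (hβ1 : β < 1)
    (γ : ℝ)
    (C : ℝ) (hC : 0 < C)
    (x : Fin m)
    (M Mh Mb Mc : ℕ)
    (CC : Fin M → Matrix (Fin m) (Fin n) ℝ) (Ch : Fin Mh → Matrix (Fin m) (Fin n) ℝ)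
    (Cb : Fin Mb → Matrix (Fin m) (Fin n) ℝ) (Cc : Fin Mc → Matrix (Fin m) (Fin n) ℝ)
    (R : Matrix (Fin m) (Fin n) ℝ)
    (hCC : ∀ i s a, |CC i s a| ≤ C) (hCh : ∀ j s a, |Ch j s a| ≤ C)
    (hR : ∀ s a, |R s a| ≤ C)
    (b : Fin M → ℝ) (bh : Fin Mh → ℝ) (bb : Fin Mb → ℝ) (bc : Fin Mc → ℝ)
    (Tb : Fin Mb → ℕ) (Tc : Fin Mc → ℕ) :
    -- the infinite-horizon risk-sensitive costs appearing below exist as limits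
    (∀ π : ℕ → Matrix (Fin m) (Fin n) ℝ, (∀ t, IsStoch m n (π t)) →
      Filter.Tendsto (fun T => JT β γ p π R T x) Filter.atTop (nhds (Jinf β γ p π R x)) ∧
      ∀ j, Filter.Tendsto (fun T => JT β γ p π (Ch j) T x) Filter.atTop
        (nhds (Jinf β γ p π (Ch j) x))) ∧
    -- (a) if F is nonempty, (P) and every (P_T^+) with T ≥ 1 have solutions
    ((Feas m n p β γ x CC Ch Cb Cc b bh bb bc Tb Tc).Nonempty →
      (∃ η ∈ Feas m n p β γ x CC Ch Cb Cc b bh bb bc Tb Tc,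
        ∀ π ∈ Feas m n p β γ x CC Ch Cb Cc b bh bb bc Tb Tc,
          Jinf β γ p η R x ≤ Jinf β γ p π R x) ∧
      ∀ T : ℕ, 1 ≤ T →
        ∃ η ∈ FeasPlus m n p β γ C x CC Ch Cb Cc b bh bb bc Tb Tc T,
          ∀ π ∈ FeasPlus m n p β γ C x CC Ch Cb Cc b bh bb bc Tb Tc T,
            JT β γ p η R T x ≤ JT β γ p π R T x) ∧
    -- (b) if F_{T*}^- is nonempty for some T* ≥ 1, then F is nonempty and (P_T^-) has a
    -- solution for every T ≥ T*
    ∀ Tstar : ℕ, 1 ≤ Tstar →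
      (FeasMinus m n p β γ C x CC Ch Cb Cc b bh bb bc Tb Tc Tstar).Nonempty →
      (Feas m n p β γ x CC Ch Cb Cc b bh bb bc Tb Tc).Nonempty ∧
      ∀ T : ℕ, Tstar ≤ T →
        ∃ η ∈ FeasMinus m n p β γ C x CC Ch Cb Cc b bh bb bc Tb Tc T,
          ∀ π ∈ FeasMinus m n p β γ C x CC Ch Cb Cc b bh bb bc Tb Tc T,
            JT β γ p η R T x ≤ JT β γ p π R T x := by
  have hβ := hβ0.le
  have hC' := hC.le
  refine ⟨fun π hπ => ⟨tendsto_JT_Jinf hp hβ hβ1 hC' hπ hR x,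
      fun j => tendsto_JT_Jinf hp hβ hβ1 hC' hπ (hCh j) x⟩,
    fun hF => ⟨?_, fun T _ => ?_⟩,
    fun Tstar _ hFm =>
      ⟨hFm.mono (FeasMinus_subset_Feas hp hβ hβ1 hC' hCC hCh Tstar), fun T hT => ?_⟩⟩
  · exact exists_forall_le_of_subset_policySet (isClosed_Feas hp hβ hβ1 hC' hCC hCh)
      (fun _ hπ => hπ.1) hF (lowerSemicontinuousOn_Jinf hp hβ hβ1 hC' hR x)
  · exact exists_forall_le_of_subset_policySet (isClosed_FeasPlus T) (fun _ hπ => hπ.1)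
      (hF.mono (Feas_subset_FeasPlus hp hβ hβ1 hC' hCC hCh T))
      (continuous_JT_apply β γ p R T x).continuousOn.lowerSemicontinuousOn
  · exact exists_forall_le_of_subset_policySet (isClosed_FeasMinus T) (fun _ hπ => hπ.1)
      (hFm.mono (monotone_FeasMinus hp hβ hβ1 hC' hCC hCh hT))
      (continuous_JT_apply β γ p R T x).continuousOn.lowerSemicontinuousOn

/-- existence of optimal solutions for `(P)`, `(P_T^+)` and `(P_T^-)`. -/
theorem stmt_19 (m n : ℕ) (hm : 1 ≤ m) (hn : 1 ≤ n)
    (p : Fin m → Fin n → Fin m → ℝ) (hp : IsTransKer m n p)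
    (β : ℝ) (hβ0 : 0 < β) (hβ1 : β < 1)
    (γ : ℝ) (hγ : γ ≠ 0)
    (C : ℝ) (hC : 0 < C)
    (x : Fin m)
    (M Mh Mb Mc : ℕ) (hM : M + Mh + Mb + Mc ≠ 0)
    (CC : Fin M → Matrix (Fin m) (Fin n) ℝ) (Ch : Fin Mh → Matrix (Fin m) (Fin n) ℝ)
    (Cb : Fin Mb → Matrix (Fin m) (Fin n) ℝ) (Cc : Fin Mc → Matrix (Fin m) (Fin n) ℝ)
    (R : Matrix (Fin m) (Fin n) ℝ)
    (hCC : ∀ i s a, |CC i s a| ≤ C) (hCh : ∀ j s a, |Ch j s a| ≤ C)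
    (hCb : ∀ k s a, |Cb k s a| ≤ C) (hCc : ∀ l s a, |Cc l s a| ≤ C)
    (hR : ∀ s a, |R s a| ≤ C)
    (b : Fin M → ℝ) (bh : Fin Mh → ℝ) (bb : Fin Mb → ℝ) (bc : Fin Mc → ℝ)
    (Tb : Fin Mb → ℕ) (hTb : ∀ k, 1 ≤ Tb k) (Tc : Fin Mc → ℕ) (hTc : ∀ l, 1 ≤ Tc l) :
    -- the infinite-horizon risk-sensitive costs appearing below exist as limits
    (∀ π : ℕ → Matrix (Fin m) (Fin n) ℝ, (∀ t, IsStoch m n (π t)) →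
      Filter.Tendsto (fun T => JT β γ p π R T x) Filter.atTop (nhds (Jinf β γ p π R x)) ∧
      ∀ j, Filter.Tendsto (fun T => JT β γ p π (Ch j) T x) Filter.atTop
        (nhds (Jinf β γ p π (Ch j) x))) ∧
    -- (a) if F is nonempty, (P) and every (P_T^+) with T ≥ 1 have solutions
    ((Feas m n p β γ x CC Ch Cb Cc b bh bb bc Tb Tc).Nonempty →
      (∃ η ∈ Feas m n p β γ x CC Ch Cb Cc b bh bb bc Tb Tc,
        ∀ π ∈ Feas m n p β γ x CC Ch Cb Cc b bh bb bc Tb Tc,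
          Jinf β γ p η R x ≤ Jinf β γ p π R x) ∧
      ∀ T : ℕ, 1 ≤ T →
        ∃ η ∈ FeasPlus m n p β γ C x CC Ch Cb Cc b bh bb bc Tb Tc T,
          ∀ π ∈ FeasPlus m n p β γ C x CC Ch Cb Cc b bh bb bc Tb Tc T,
            JT β γ p η R T x ≤ JT β γ p π R T x) ∧
    -- (b) if F_{T*}^- is nonempty for some T* ≥ 1, then F is nonempty and (P_T^-) has a
    -- solution for every T ≥ T*
    ∀ Tstar : ℕ, 1 ≤ Tstar →
      (FeasMinus m n p β γ C x CC Ch Cb Cc b bh bb bc Tb Tc Tstar).Nonempty →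
      (Feas m n p β γ x CC Ch Cb Cc b bh bb bc Tb Tc).Nonempty ∧
      ∀ T : ℕ, Tstar ≤ T →
        ∃ η ∈ FeasMinus m n p β γ C x CC Ch Cb Cc b bh bb bc Tb Tc T,
          ∀ π ∈ FeasMinus m n p β γ C x CC Ch Cb Cc b bh bb bc Tb Tc T,
            JT β γ p η R T x ≤ JT β γ p π R T x :=
  stmt_19_general m n p hp β hβ0 hβ1 γ C hC x M Mh Mb Mc CC Ch Cb Cc R hCC hCh hR b bh bb bc Tb Tc

end Statement19
end
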